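/- arXiv:2605.18707 — 10 statements merged into one kernel-verified Lean document; each statement's English description precedes it below -/
import Mathlib

section
/- Let k ≥ 1 and let C ⟶ C' be a beneficial exchange step between configurations. Then the list of weights of the elements of C', sorted in increasing order, is strictly smaller than the list of weights of the elements of C, sorted in increasing order, in the lexicographic order on lists of natural numbers (both lists have the same length). -/
/-- The weight of a braket `(i,j)`: `k` if `i = j`, otherwise the representative
in `{1,…,k−1}` of `(j − i) mod k`. -/
def weight (k : ℕ) (p : Fin k × Fin k) : ℕ :=
  if p.1 = p.2 then k else (p.2.val + k - p.1.val) % k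

/-- A beneficial exchange step between configurations. -/
def Step (k : ℕ) (C C' : Multiset (Fin k × Fin k)) : Prop :=
  ∃ i j i' j' : Fin k,
    {(i, j), (i', j')} ≤ C ∧
    C' = C - {(i, j), (i', j')} + {(i, j'), (i', j)} ∧
    min (weight k (i, j')) (weight k (i', j)) <
      min (weight k (i, j)) (weight k (i', j'))

lemma lex_of_counts : ∀ (L L' : List ℕ), L.Pairwise (· ≤ ·) → L'.Pairwise (· ≤ ·) →
    L.length = L'.length →
    (∃ m, (∀ x < m, L'.count x = L.count x) ∧ L.count m < L'.count m) →
    List.Lex (· < ·) L' L := by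
  intro L
  induction L with
  | nil =>
    rintro L' _ _ hlen ⟨m, _, hm⟩
    have : L' = [] := List.eq_nil_of_length_eq_zero hlen.symm
    subst this; simp at hm
  | cons a t ih =>
    rintro L' hs hs' hlen hex
    cases L' with
    | nil => simp at hlen
    | cons a' t' =>
      rcases lt_trichotomy a' a with h | h | h
      · exact List.Lex.rel h
      · subst h
        apply List.Lex.cons
        obtain ⟨m, hlt, hm⟩ := hex
        refine ih t' hs.of_cons hs'.of_cons (by simpa using hlen) ⟨m, ?_, ?_⟩
        · intro x hx
          have := hlt x hx
          simp [List.count_cons] at this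
          omega
        · simp [List.count_cons] at hm
          omega
      · exfalso
        obtain ⟨m, hlt, hm⟩ := hex
        have hall : ∀ y ∈ a' :: t', a' ≤ y := by
          intro y hy
          rcases List.mem_cons.1 hy with rfl | hy
          · exact le_refl _
          · exact (List.pairwise_cons.1 hs').1 y hy
        by_cases hma : m ≤ a
        · have hmem : m ∈ a' :: t' := by
            have : 0 < (a' :: t').count m := by omega
            exact List.count_pos_iff.mp this
          have := hall m hmem
          omega
        · have h1 := hlt a (by omega)
          have h2 : a ∉ a' :: t' := by
            intro hmem
            have := hall a hmem
            omega
          rw [List.count_eq_zero_of_not_mem h2] at h1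
          have : 0 < (a :: t).count a := by simp [List.count_cons]
          omega

lemma count_sort (x : ℕ) (M : Multiset ℕ) :
    (M.sort (· ≤ ·)).count x = M.count x := by
  rw [← Multiset.coe_count, Multiset.sort_eq]

lemma sort_lex (D : Multiset ℕ) (a b c d : ℕ) (h : min c d < min a b) :
    List.Lex (· < ·) ((D + {c, d}).sort (· ≤ ·)) ((D + {a, b}).sort (· ≤ ·)) := by
  apply lex_of_counts
  · exact Multiset.pairwise_sort _ _
  · exact Multiset.pairwise_sort _ _
  · simp
  · refine ⟨min c d, ?_, ?_⟩
    · intro x hx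
      have hxc : x ≠ c := by omega
      have hxd : x ≠ d := by omega
      have hxa : x ≠ a := by omega
      have hxb : x ≠ b := by omega
      simp [count_sort, Multiset.count_cons, Multiset.count_singleton, hxc, hxd, hxa, hxb]
    · have h1 : min c d ≠ a := by omega
      have h2 : min c d ≠ b := by omega
      have h3 : min c d = c ∨ min c d = d := by omega
      simp only [count_sort, Multiset.count_add]
      have : ({a, b} : Multiset ℕ).count (min c d) = 0 := by
        simp [Multiset.count_cons, Multiset.count_singleton, h1, h2]
      rw [this]
      have : 0 < ({c, d} : Multiset ℕ).count (min c d) := by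
        rcases h3 with h3 | h3 <;>
          simp [Multiset.count_cons, Multiset.count_singleton, h3] <;> omega
      omega

/-- After a beneficial exchange step, the sorted list of weights strictly
decreases in the lexicographic order on lists of naturals. -/
theorem stmt2 (k : ℕ) (hk : 1 ≤ k) (C C' : Multiset (Fin k × Fin k))
    (h : Step k C C') :
    List.Lex (· < ·) ((C'.map (weight k)).sort (· ≤ ·))
      ((C.map (weight k)).sort (· ≤ ·)) := by
  obtain ⟨i, j, i', j', hle, hC', hw⟩ := h
  have hC : C = (C - {(i, j), (i', j')}) + {(i, j), (i', j')} :=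
    (tsub_add_cancel_of_le hle).symm
  rw [hC', hC]
  rw [Multiset.map_add, Multiset.map_add]
  have e1 : ({(i, j'), (i', j)} : Multiset (Fin k × Fin k)).map (weight k) =
      {weight k (i, j'), weight k (i', j)} := by simp
  have e2 : ({(i, j), (i', j')} : Multiset (Fin k × Fin k)).map (weight k) =
      {weight k (i, j), weight k (i', j')} := by simp
  rw [e1, e2]
  have := sort_lex ((C - {(i, j), (i', j')}).map (weight k))
    (weight k (i, j)) (weight k (i', j')) (weight k (i, j')) (weight k (i', j)) hw
  -- note: hC rewrote also inside C - {...}; fix that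
  convert this using 4 <;> rw [← hC]
end

section
/- Let k ≥ 1. There is no infinite sequence of configurations C₀ ⟶ C₁ ⟶ C₂ ⟶ ⋯ over Fin k × Fin k in which every consecutive pair is related by a beneficial exchange step; equivalently, the converse of the beneficial exchange step relation on multisets over Fin k × Fin k is well-founded. -/
namespace StepWFAux

lemma weight_le (k : ℕ) (p : Fin k × Fin k) : weight k p ≤ k := by
  unfold weight
  split
  · exact le_refl k
  · have hk : 0 < k := p.1.pos
    exact le_of_lt (Nat.mod_lt _ hk)

/-- The per-element potential, base `B`. -/
def phiB (k B : ℕ) (C : Multiset (Fin k × Fin k)) : ℕ :=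
  (C.map fun p => B ^ (k - weight k p)).sum

lemma phiB_add (k B : ℕ) (C D : Multiset (Fin k × Fin k)) :
    phiB k B (C + D) = phiB k B C + phiB k B D := by
  simp [phiB]

lemma phiB_le (k B : ℕ) (hB : 1 ≤ B) (C : Multiset (Fin k × Fin k)) :
    phiB k B C ≤ Multiset.card C * B ^ k := by
  have h := Multiset.sum_le_card_nsmul (C.map fun p => B ^ (k - weight k p)) (B ^ k) ?_
  · simpa [smul_eq_mul, phiB] using h
  · intro x hx
    obtain ⟨p, _, rfl⟩ := Multiset.mem_map.mp hx
    exact Nat.pow_le_pow_right hB (Nat.sub_le _ _)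

lemma key {B k wa wb wc wd : ℕ} (hB : 3 ≤ B) (hwa : wa ≤ k)
    (hlt : min wc wd < min wa wb) :
    B ^ (k - wa) + B ^ (k - wb) < B ^ (k - wc) + B ^ (k - wd) := by
  set m := min wc wd with hm
  have hma : m < wa := lt_of_lt_of_le hlt (min_le_left _ _)
  have hmb : m < wb := lt_of_lt_of_le hlt (min_le_right _ _)
  have hmk : m < k := lt_of_lt_of_le hma hwa
  have hB1 : 1 ≤ B := by omega
  have ha : B ^ (k - wa) ≤ B ^ (k - m - 1) := Nat.pow_le_pow_right hB1 (by omega)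
  have hb : B ^ (k - wb) ≤ B ^ (k - m - 1) := Nat.pow_le_pow_right hB1 (by omega)
  have hp : 1 ≤ B ^ (k - m - 1) := Nat.one_le_pow _ _ (by omega)
  have hkey : B ^ (k - wa) + B ^ (k - wb) < B ^ (k - m) := by
    have hpow : B ^ (k - m) = B ^ (k - m - 1) * B := by
      rw [← pow_succ]
      congr 1
      omega
    calc B ^ (k - wa) + B ^ (k - wb) ≤ B ^ (k - m - 1) + B ^ (k - m - 1) :=
          Nat.add_le_add ha hb
      _ < B ^ (k - m - 1) * B := by nlinarith
      _ = B ^ (k - m) := hpow.symm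
  rcases min_choice wc wd with h | h
  · calc B ^ (k - wa) + B ^ (k - wb) < B ^ (k - m) := hkey
      _ ≤ B ^ (k - wc) + B ^ (k - wd) := by rw [hm, h]; exact Nat.le_add_right _ _
  · calc B ^ (k - wa) + B ^ (k - wb) < B ^ (k - m) := hkey
      _ ≤ B ^ (k - wc) + B ^ (k - wd) := by rw [hm, h]; exact Nat.le_add_left _ _

/-- The global measure. -/
def nu (k : ℕ) (C : Multiset (Fin k × Fin k)) : ℕ :=
  Multiset.card C * (Multiset.card C + 1) ^ k + 1 -
    phiB k (Multiset.card C + 1) C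

lemma nu_lt {k : ℕ} {C C' : Multiset (Fin k × Fin k)} (h : Step k C C') :
    nu k C' < nu k C := by
  obtain ⟨i, j, i', j', hle, hC', hlt⟩ := h
  set S : Multiset (Fin k × Fin k) := {(i, j), (i', j')} with hS
  set T : Multiset (Fin k × Fin k) := {(i, j'), (i', j)} with hT
  have hcardS : Multiset.card S = 2 := rfl
  have h2 : 2 ≤ Multiset.card C := by
    have := Multiset.card_le_card hle
    simpa [hcardS] using this
  have hcard : Multiset.card C' = Multiset.card C := by
    rw [hC']
    rw [Multiset.card_add, Multiset.card_sub hle]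
    simp [hcardS, hT]
    omega
  set n := Multiset.card C with hn
  set B := n + 1 with hBdef
  have hB3 : 3 ≤ B := by omega
  have hsplit : (C - S) + S = C := tsub_add_cancel_of_le hle
  have hphiC : phiB k B C = phiB k B (C - S) + phiB k B S := by
    conv_lhs => rw [← hsplit]
    exact phiB_add k B _ _
  have hphiC' : phiB k B C' = phiB k B (C - S) + phiB k B T := by
    rw [hC']
    exact phiB_add k B _ _
  have hST : phiB k B S < phiB k B T := by
    have hSval : phiB k B S =
        B ^ (k - weight k (i, j)) + B ^ (k - weight k (i', j')) := by
      simp [phiB, hS]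
    have hTval : phiB k B T =
        B ^ (k - weight k (i, j')) + B ^ (k - weight k (i', j)) := by
      simp [phiB, hT]
    rw [hSval, hTval]
    exact key hB3 (weight_le k (i, j)) hlt
  have hphi_lt : phiB k B C < phiB k B C' := by
    rw [hphiC, hphiC']
    omega
  have hbound : phiB k B C < n * B ^ k + 1 := by
    have hb := phiB_le k B (by omega) C
    rw [← hn] at hb
    omega
  unfold nu
  rw [hcard, ← hn, ← hBdef]
  exact Nat.sub_lt_sub_left hbound hphi_lt

end StepWFAux

/-- There is no infinite sequence of beneficial exchange steps; equivalently,
the converse of the step relation is well-founded. -/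
theorem stmt3 (k : ℕ) (hk : 1 ≤ k) :
    (¬ ∃ f : ℕ → Multiset (Fin k × Fin k), ∀ t, Step k (f t) (f (t + 1))) ∧
      WellFounded (fun C' C : Multiset (Fin k × Fin k) => Step k C C') := by
  constructor
  · rintro ⟨f, hf⟩
    have hd : ∀ t, StepWFAux.nu k (f (t + 1)) < StepWFAux.nu k (f t) :=
      fun t => StepWFAux.nu_lt (hf t)
    have hle : ∀ t, StepWFAux.nu k (f t) + t ≤ StepWFAux.nu k (f 0) := by
      intro t
      induction t with
      | zero => simp
      | succ n ih => have := hd n; omega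
    have := hle (StepWFAux.nu k (f 0) + 1)
    omega
  · have hsub : Subrelation (fun C' C : Multiset (Fin k × Fin k) => Step k C C')
        (InvImage (· < ·) (StepWFAux.nu k)) := fun h => StepWFAux.nu_lt h
    exact Subrelation.wf hsub (InvImage.wf _ Nat.lt_wfRel.wf)
end

section
/- (Stabilization) Let k ≥ 1, n ≥ 1, and consider any n-agent Circles computation (c, sch, σ), with no fairness assumption on the schedule. Then the agents exchange their kets only finitely many times: there exists T ∈ ℕ such that σ t = σ T for all t ≥ T. -/
/-- One step of the Circles protocol: agents `a` and `b` exchange their kets iff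
doing so strictly decreases the minimum weight of their two brakets; all other
agents are unchanged. -/
def circlesStep (k n : ℕ) (st : Fin n → Fin k × Fin k) (a b : Fin n) :
    Fin n → Fin k × Fin k :=
  if min (weight k ((st a).1, (st b).2)) (weight k ((st b).1, (st a).2)) <
      min (weight k (st a)) (weight k (st b))
  then Function.update (Function.update st a ((st a).1, (st b).2)) b ((st b).1, (st a).2)
  else st

lemma weight_pos (k : ℕ) (hk : 1 ≤ k) (p : Fin k × Fin k) : 1 ≤ weight k p := by
  unfold weight
  split
  · exact hk
  · rename_i h
    have h1 : p.1.val < k := p.1.isLt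
    have h2 : p.2.val < k := p.2.isLt
    have hne : p.1.val ≠ p.2.val := fun he => h (Fin.ext he)
    rcases Nat.lt_or_ge p.1.val p.2.val with hlt | hge
    · have : p.2.val + k - p.1.val = k + (p.2.val - p.1.val) := by omega
      rw [this, Nat.add_mod_left]
      rw [Nat.mod_eq_of_lt (by omega)]
      omega
    · have : p.2.val + k - p.1.val < k := by omega
      rw [Nat.mod_eq_of_lt this]
      omega

lemma weight_le (k : ℕ) (p : Fin k × Fin k) : weight k p ≤ k := by
  unfold weight
  split
  · exact le_refl k
  · exact le_of_lt (Nat.mod_lt _ (by have := p.1.isLt; omega))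

lemma weight_mod (k : ℕ) (p : Fin k × Fin k) :
    weight k p % k = (p.2.val + k - p.1.val) % k := by
  unfold weight
  split
  · rename_i h
    rw [h]
    have : p.2.val + k - p.2.val = k := by omega
    rw [this, Nat.mod_self]
  · exact Nat.mod_mod_of_dvd _ dvd_rfl

set_option maxHeartbeats 1000000 in
/-- key arithmetic lemma -/
lemma key_arith (k a b c d : ℕ) (hk : 1 ≤ k)
    (ha1 : 1 ≤ a) (hak : a ≤ k) (hb1 : 1 ≤ b) (hbk : b ≤ k)
    (hc1 : 1 ≤ c) (hck : c ≤ k) (hd1 : 1 ≤ d) (hdk : d ≤ k)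
    (hmod : (c + d) % k = (a + b) % k)
    (hlt : min c d < min a b) :
    c * (2*k^2+1 - c) + d * (2*k^2+1 - d) < a * (2*k^2+1 - a) + b * (2*k^2+1 - b) := by
  have hdvd : (k:ℤ) ∣ (a + b : ℕ) - (c + d : ℕ) :=
    (Nat.modEq_iff_dvd (n := k)).mp hmod
  obtain ⟨m, hm⟩ := hdvd
  push_cast at hm
  have hm2 : m = -1 ∨ m = 0 ∨ m = 1 := by
    have hkz : (0:ℤ) < k := by exact_mod_cast hk
    have h1 : (a:ℤ) + b - (c + d) ≤ 2*k - 2 := by omega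
    have h2 : -(2*(k:ℤ)) + 2 ≤ (a:ℤ) + b - (c + d) := by omega
    rw [hm] at h1 h2
    have hml : -2 < m := by nlinarith
    have hmr : m < 2 := by nlinarith
    omega
  -- convert goal to ℤ
  have hck2 : c ≤ 2*k^2+1 := by nlinarith
  have hdk2 : d ≤ 2*k^2+1 := by nlinarith
  have hak2 : a ≤ 2*k^2+1 := by nlinarith
  have hbk2 : b ≤ 2*k^2+1 := by nlinarith
  zify [hck2, hdk2, hak2, hbk2]
  rcases hm2 with rfl | rfl | rfl
  · -- a + b - (c+d) = -k : c + d = a + b + k, contradiction with min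
    exfalso
    have hsum : c + d = a + b + k := by omega
    omega
  · -- sums equal
    have hsum : c + d = a + b := by omega
    have hsum' : (c:ℤ) + d = a + b := by exact_mod_cast hsum
    rcases le_total c d with hcd | hcd
    · have hc : c < a ∧ c < b := by omega
      have hpos : (0:ℤ) < ((a:ℤ) - c) * ((b:ℤ) - c) := by
        apply mul_pos
        · have : (c:ℤ) < a := by exact_mod_cast hc.1
          linarith
        · have : (c:ℤ) < b := by exact_mod_cast hc.2
          linarith
      nlinarith [hpos, hsum']
    · have hd : d < a ∧ d < b := by omega
      have hpos : (0:ℤ) < ((a:ℤ) - d) * ((b:ℤ) - d) := by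
        apply mul_pos
        · have : (d:ℤ) < a := by exact_mod_cast hd.1
          linarith
        · have : (d:ℤ) < b := by exact_mod_cast hd.2
          linarith
      nlinarith [hpos, hsum']
  · -- a + b = c + d + k
    have hsum : c + d + k = a + b := by omega
    have hkz : (1:ℤ) ≤ k := by exact_mod_cast hk
    have h2 : (c:ℤ) + d + k = a + b := by exact_mod_cast hsum
    have haI : (1:ℤ) ≤ a ∧ (a:ℤ) ≤ k := ⟨by exact_mod_cast ha1, by exact_mod_cast hak⟩
    have hbI : (1:ℤ) ≤ b ∧ (b:ℤ) ≤ k := ⟨by exact_mod_cast hb1, by exact_mod_cast hbk⟩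
    have hcI : (1:ℤ) ≤ c ∧ (c:ℤ) ≤ k := ⟨by exact_mod_cast hc1, by exact_mod_cast hck⟩
    have hdI : (1:ℤ) ≤ d ∧ (d:ℤ) ≤ k := ⟨by exact_mod_cast hd1, by exact_mod_cast hdk⟩
    have hab2 : (a:ℤ)^2 + (b:ℤ)^2 ≤ 2*(k:ℤ)^2 := by nlinarith [haI.1, haI.2, hbI.1, hbI.2, hkz]
    have hcd2 : (2:ℤ) ≤ (c:ℤ)^2 + (d:ℤ)^2 := by nlinarith [hcI.1, hdI.1]
    have hk3 : 2*(k:ℤ)^2 ≤ 2*(k:ℤ)^3 := by nlinarith [hkz]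
    nlinarith [hab2, hcd2, hk3, h2, hkz]

noncomputable def gfun (k w : ℕ) : ℕ := w * (2*k^2+1 - w)

noncomputable def Phi (k n : ℕ) (st : Fin n → Fin k × Fin k) : ℕ :=
  ∑ a, gfun k (weight k (st a))

lemma sum_two_update {n : ℕ} (f : Fin n → ℕ) (a b : Fin n) (hab : a ≠ b) (v w : ℕ) :
    (∑ x, Function.update (Function.update f a v) b w x) + (f a + f b)
      = (∑ x, f x) + (v + w) := by
  rw [Finset.sum_update_of_mem (Finset.mem_univ b)]
  rw [Finset.sum_update_of_mem (by simp [hab] : a ∈ Finset.univ \ {b})]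
  rw [Finset.sum_eq_add_sum_sdiff_singleton_of_mem (Finset.mem_univ b) f]
  rw [Finset.sum_eq_add_sum_sdiff_singleton_of_mem (by simp [hab] : a ∈ Finset.univ \ {b}) f]
  ring

lemma step_dec (k n : ℕ) (hk : 1 ≤ k) (st : Fin n → Fin k × Fin k) (a b : Fin n)
    (hab : a ≠ b) :
    circlesStep k n st a b = st ∨ Phi k n (circlesStep k n st a b) < Phi k n st := by
  unfold circlesStep
  split
  · rename_i hlt
    right
    set p : Fin k × Fin k := ((st a).1, (st b).2) with hp
    set q : Fin k × Fin k := ((st b).1, (st a).2) with hq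
    have hfun : (fun x => gfun k (weight k (Function.update (Function.update st a p) b q x)))
        = Function.update (Function.update (fun x => gfun k (weight k (st x))) a
            (gfun k (weight k p))) b (gfun k (weight k q)) := by
      funext x
      rcases eq_or_ne x b with rfl | hxb
      · simp [Function.update_self]
      · rw [Function.update_of_ne hxb, Function.update_of_ne hxb]
        rcases eq_or_ne x a with rfl | hxa
        · simp [Function.update_self]
        · rw [Function.update_of_ne hxa, Function.update_of_ne hxa]
    have hsum := sum_two_update (fun x => gfun k (weight k (st x))) a b hab
      (gfun k (weight k p)) (gfun k (weight k q))
    have hmod : (weight k p + weight k q) % k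
        = (weight k (st a) + weight k (st b)) % k := by
      have h1 := weight_mod k p
      have h2 := weight_mod k q
      have h3 := weight_mod k (st a)
      have h4 := weight_mod k (st b)
      have hia := (st a).1.isLt
      have hib := (st b).1.isLt
      have heq : (p.2.val + k - p.1.val) + (q.2.val + k - q.1.val)
          = ((st a).2.val + k - (st a).1.val) + ((st b).2.val + k - (st b).1.val) := by
        simp only [hp, hq]
        omega
      calc (weight k p + weight k q) % k
          = ((p.2.val + k - p.1.val) + (q.2.val + k - q.1.val)) % k := Nat.ModEq.add h1 h2
        _ = (((st a).2.val + k - (st a).1.val) + ((st b).2.val + k - (st b).1.val)) % k := by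
            rw [heq]
        _ = (weight k (st a) + weight k (st b)) % k := (Nat.ModEq.add h3 h4).symm
    have hkey := key_arith k (weight k (st a)) (weight k (st b)) (weight k p) (weight k q) hk
      (weight_pos k hk _) (weight_le k _) (weight_pos k hk _) (weight_le k _)
      (weight_pos k hk _) (weight_le k _) (weight_pos k hk _) (weight_le k _)
      hmod hlt
    have hkey' : gfun k (weight k p) + gfun k (weight k q)
        < gfun k (weight k (st a)) + gfun k (weight k (st b)) := by
      simpa [gfun] using hkey
    have hPhi : Phi k n (Function.update (Function.update st a p) b q)
        + (gfun k (weight k (st a)) + gfun k (weight k (st b)))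
        = Phi k n st + (gfun k (weight k p) + gfun k (weight k q)) := by
      unfold Phi
      rw [← hsum]
      congr 1
      exact Finset.sum_congr rfl (fun x _ => congrFun hfun x)
    omega
  · left
    rfl

/-- (Stabilization) In any Circles computation, with no fairness assumption on
the schedule, the agents exchange their kets only finitely many times. -/
theorem stmt4 (k n : ℕ) (hk : 1 ≤ k) (hn : 1 ≤ n)
    (c : Fin n → Fin k) (sch : ℕ → Fin n × Fin n)
    (hsch : ∀ t, (sch t).1 ≠ (sch t).2)
    (σ : ℕ → Fin n → Fin k × Fin k)
    (hinit : ∀ a, σ 0 a = (c a, c a))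
    (hstep : ∀ t, σ (t + 1) = circlesStep k n (σ t) (sch t).1 (sch t).2) :
    ∃ T : ℕ, ∀ t ≥ T, σ t = σ T := by
  set f : ℕ → ℕ := fun t => Phi k n (σ t) with hf
  have hdec : ∀ t, σ (t + 1) = σ t ∨ f (t + 1) < f t := by
    intro t
    rcases step_dec k n hk (σ t) (sch t).1 (sch t).2 (hsch t) with h | h
    · left; rw [hstep t, h]
    · right
      simp only [hf]
      rw [hstep t]
      exact h
  have hmono : ∀ s t : ℕ, s ≤ t → f t ≤ f s := by
    intro s t h
    induction t with
    | zero => rw [Nat.le_zero.mp h]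
    | succ t ih =>
      rcases Nat.lt_or_ge s (t+1) with hst | hst
      · have h1 : f t ≤ f s := ih (by omega)
        rcases hdec t with he | hl
        · have : f (t+1) = f t := by simp [hf, he]
          omega
        · omega
      · have hs : s = t + 1 := by omega
        rw [hs]
  obtain ⟨T, hT⟩ : ∃ T : ℕ, ∀ t, f T ≤ f t := by
    have hmem : sInf (Set.range f) ∈ Set.range f := Nat.sInf_mem ⟨f 0, 0, rfl⟩
    obtain ⟨T, hTe⟩ := hmem
    exact ⟨T, fun t => hTe ▸ Nat.sInf_le ⟨t, rfl⟩⟩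
  refine ⟨T, ?_⟩
  intro t ht
  obtain ⟨d, rfl⟩ := Nat.exists_eq_add_of_le ht
  clear ht
  induction d with
  | zero => rfl
  | succ d ih =>
    rcases hdec (T + d) with he | hl
    · rw [show T + (d+1) = (T+d) + 1 from rfl, he, ih]
    · exfalso
      have h1 : f (T + d + 1) ≥ f T := hT _
      have h2 : f (T + d) ≤ f T := hmono T (T+d) (by omega)
      omega
end

section
/- Let k ≥ 1, let x : Fin k → ℕ, and let C be a configuration over Fin k × Fin k that satisfies the braket invariant with respect to x and is stable. Then C equals U(x) = Σ_{p=1}^{q} f(G_p), the multiset union of the circle braket multisets of the greedy independent sets of x, where q = max_i x i. -/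
/-- The greedy independent set `G_p = {i : x i ≥ p}`. -/
def greedySet (k : ℕ) (x : Fin k → ℕ) (p : ℕ) : Finset (Fin k) :=
  Finset.univ.filter (fun i => p ≤ x i)

/-- The circle braket multiset of a finite set of colors `g_0 < g_1 < … < g_m`:
`{(g_0,g_1), (g_1,g_2), …, (g_{m−1},g_m), (g_m,g_0)}`. -/
def circleBrakets (k : ℕ) (S : Finset (Fin k)) : Multiset (Fin k × Fin k) :=
  ↑((S.sort (· ≤ ·)).zip ((S.sort (· ≤ ·)).rotate 1))

/-- `U(x) = Σ_{p=1}^{q} f(G_p)`, with `q = max_i x i`. -/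
def U (k : ℕ) (x : Fin k → ℕ) : Multiset (Fin k × Fin k) :=
  ∑ p ∈ Finset.Icc 1 (Finset.univ.sup x), circleBrakets k (greedySet k x p)

/-- `C` satisfies the braket invariant with respect to `x`: for every color `i`,
the number of bras `i` and the number of kets `i` in `C` both equal `x i`. -/
def Invariant (k : ℕ) (x : Fin k → ℕ) (C : Multiset (Fin k × Fin k)) : Prop :=
  ∀ i : Fin k, (C.filter (fun p => p.1 = i)).card = x i ∧
    (C.filter (fun p => p.2 = i)).card = x i

/-- `C` is stable: no beneficial exchange step applies to it. -/
def Stable (k : ℕ) (C : Multiset (Fin k × Fin k)) : Prop :=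
  ∀ i j i' j' : Fin k, {(i, j), (i', j')} ≤ C →
    min (weight k (i, j)) (weight k (i', j')) ≤
      min (weight k (i, j')) (weight k (i', j))

lemma weight_eq {k : ℕ} (a b : Fin k) :
    weight k (a, b) = if a.val < b.val then b.val - a.val else k + b.val - a.val := by
  have ha := a.isLt; have hb := b.isLt
  show (if a = b then k else (b.val + k - a.val) % k) = _
  rcases eq_or_ne a b with rfl | hne
  · simp
  · have hv : a.val ≠ b.val := fun h => hne (Fin.ext h)
    rw [if_neg hne]
    rcases lt_or_gt_of_ne hv with h | h
    · rw [if_pos h, show b.val + k - a.val = (b.val - a.val) + k by omega,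
        Nat.add_mod_right, Nat.mod_eq_of_lt (by omega)]
    · rw [if_neg (by omega), Nat.mod_eq_of_lt (by omega)]; omega

lemma weight_bounds {k : ℕ} (a b : Fin k) : 1 ≤ weight k (a, b) ∧ weight k (a, b) ≤ k := by
  have ha := a.isLt; have hb := b.isLt
  rw [weight_eq]; split <;> omega

lemma weight_add {k : ℕ} (a b : Fin k) : (a.val + weight k (a, b)) % k = b.val := by
  have ha := a.isLt; have hb := b.isLt
  rw [weight_eq]; split
  · rw [show a.val + (b.val - a.val) = b.val by omega, Nat.mod_eq_of_lt hb]
  · rw [show a.val + (k + b.val - a.val) = b.val + k by omega, Nat.add_mod_right,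
      Nat.mod_eq_of_lt hb]

lemma weight_uniq {k : ℕ} (a i : Fin k) (s : ℕ) (h1 : 1 ≤ s) (h2 : s ≤ k)
    (h : (a.val + s) % k = i.val) : weight k (a, i) = s := by
  have ha := a.isLt; have hi := i.isLt
  rcases Nat.lt_or_ge (a.val + s) k with hc | hc
  · rw [Nat.mod_eq_of_lt hc] at h
    rw [weight_eq]; split <;> omega
  · have : (a.val + s) % k = a.val + s - k := by
      rw [Nat.mod_eq_sub_mod hc, Nat.mod_eq_of_lt (by omega)]
    rw [this] at h
    rw [weight_eq]; split <;> omega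

lemma weight_inj {k : ℕ} (a b j : Fin k) (h : weight k (a, j) = weight k (a, b)) : j = b := by
  have h1 := weight_add a b; have h2 := weight_add a j
  rw [h] at h2; exact Fin.ext (by rw [← h1, ← h2])

lemma pair_le {α : Type*} [DecidableEq α] {a b : α} {C : Multiset α}
    (hne : a ≠ b) (ha : a ∈ C) (hb : b ∈ C) : ({a, b} : Multiset α) ≤ C := by
  rw [Multiset.le_iff_count]
  intro y
  rw [Multiset.insert_eq_cons, Multiset.count_cons, Multiset.count_singleton]
  by_cases hya : y = a
  · subst hya
    rw [if_neg hne, if_pos rfl]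
    simpa using Multiset.one_le_count_iff_mem.2 ha
  · rw [if_neg hya]
    by_cases hyb : y = b
    · subst hyb
      rw [if_pos rfl]
      simpa using Multiset.one_le_count_iff_mem.2 hb
    · rw [if_neg hyb]; omega

lemma mem_supp_of_mem {k : ℕ} {x : Fin k → ℕ} {C : Multiset (Fin k × Fin k)}
    (hinv : Invariant k x C) {p : Fin k × Fin k} (hp : p ∈ C) :
    1 ≤ x p.1 ∧ 1 ≤ x p.2 := by
  constructor
  · rw [← (hinv p.1).1]
    have hmem : p ∈ C.filter (fun q => q.1 = p.1) := Multiset.mem_filter.2 ⟨hp, rfl⟩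
    exact Multiset.card_pos.2 fun h => by simp [h] at hmem
  · rw [← (hinv p.2).2]
    have hmem : p ∈ C.filter (fun q => q.2 = p.2) := Multiset.mem_filter.2 ⟨hp, rfl⟩
    exact Multiset.card_pos.2 fun h => by simp [h] at hmem

lemma pair_mem_of_min {k : ℕ} {x : Fin k → ℕ} {C : Multiset (Fin k × Fin k)}
    (hinv : Invariant k x C) (hstab : Stable k C) (a b : Fin k)
    (ha : 1 ≤ x a) (hb : 1 ≤ x b)
    (hmin : ∀ j : Fin k, 1 ≤ x j → weight k (a, b) ≤ weight k (a, j)) :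
    (a, b) ∈ C := by
  by_contra hnot
  -- some braket with bra a
  have hA : ∃ j, (a, j) ∈ C := by
    have h1 := (hinv a).1
    have hne : C.filter (fun q => q.1 = a) ≠ 0 := by
      intro h; rw [h] at h1; simp at h1; omega
    obtain ⟨p, hp⟩ := Multiset.exists_mem_of_ne_zero hne
    obtain ⟨hpC, hpa⟩ := Multiset.mem_filter.1 hp
    exact ⟨p.2, by rwa [show (a, p.2) = p by rw [← hpa]]⟩
  have hB : ∃ i, (i, b) ∈ C := by
    have h1 := (hinv b).2
    have hne : C.filter (fun q => q.2 = b) ≠ 0 := by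
      intro h; rw [h] at h1; simp at h1; omega
    obtain ⟨p, hp⟩ := Multiset.exists_mem_of_ne_zero hne
    obtain ⟨hpC, hpb⟩ := Multiset.mem_filter.1 hp
    exact ⟨p.1, by rwa [show (p.1, b) = p by rw [← hpb]]⟩
  obtain ⟨j, hAj⟩ := hA
  obtain ⟨i, hBi⟩ := hB
  have hjb : j ≠ b := fun h => hnot (h ▸ hAj)
  have hia : i ≠ a := fun h => hnot (h ▸ hBi)
  set d := weight k (a, b) with hd
  have hj_supp := (mem_supp_of_mem hinv hAj).2
  have hi_supp := (mem_supp_of_mem hinv hBi).1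
  have h1 : d < weight k (a, j) :=
    lt_of_le_of_ne (hmin j hj_supp) (fun h => hjb (weight_inj a b j h.symm))
  have h2 : d < weight k (i, b) := by
    by_contra hle
    push_neg at hle
    set t := weight k (i, b) with ht
    have ht1 : 1 ≤ t := (weight_bounds i b).1
    have hdk : d ≤ k := (weight_bounds a b).2
    have hb1 : (i.val + t) % k = b.val := weight_add i b
    have hb2 : (a.val + d) % k = b.val := weight_add a b
    have hm : Nat.ModEq k (a.val + (d - t) + t) (i.val + t) := by
      show _ % k = _ % k
      rw [show a.val + (d - t) + t = a.val + d by omega, hb1, hb2]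
    have hm2 : (a.val + (d - t)) % k = i.val % k := hm.add_right_cancel' t
    rw [Nat.mod_eq_of_lt i.isLt] at hm2
    rcases eq_or_lt_of_le hle with heq | hlt
    · -- t = d, so i = a
      have : a.val % k = i.val := by rw [← hm2]; congr 1; omega
      rw [Nat.mod_eq_of_lt a.isLt] at this
      exact hia (Fin.ext this.symm)
    · have hw : weight k (a, i) = d - t := weight_uniq a i (d - t) (by omega) (by omega) hm2
      have := hmin i hi_supp
      omega
  have hne : (a, j) ≠ (i, b) := fun h => hjb (congrArg Prod.snd h)
  have hpair : ({(a, j), (i, b)} : Multiset (Fin k × Fin k)) ≤ C := pair_le hne hAj hBi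
  have hst := hstab a j i b hpair
  have hlt : d < min (weight k (a, j)) (weight k (i, b)) := lt_min h1 h2
  have : min (weight k (a, j)) (weight k (i, b)) ≤ d :=
    le_trans hst (min_le_left _ _)
  omega

lemma cb_mem_min {k : ℕ} {S : Finset (Fin k)} {a b : Fin k}
    (hp : (a, b) ∈ circleBrakets k S) :
    a ∈ S ∧ b ∈ S ∧ ∀ j ∈ S, weight k (a, b) ≤ weight k (a, j) := by
  set L := S.sort (· ≤ ·) with hLdef
  have hmem : (a, b) ∈ L.zip (L.rotate 1) := by
    simpa [circleBrakets] using hp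
  obtain ⟨n, hn, hget⟩ := List.mem_iff_getElem.1 hmem
  have hlenz : (L.zip (L.rotate 1)).length = L.length := by
    simp [List.length_zip]
  have hnL : n < L.length := by omega
  have hr : n < (L.rotate 1).length := by simpa using hnL
  rw [List.getElem_zip] at hget
  have hrot : (L.rotate 1)[n] = L[(n + 1) % L.length]'(Nat.mod_lt _ (by omega)) := by
    rw [List.getElem_rotate]
  have hsm : StrictMono L.get := (S.sortedLT_sort).strictMono_get
  have hmono : ∀ s t : ℕ, (hs : s < L.length) → (ht : t < L.length) → s ≤ t →
      (L[s]'hs).val ≤ (L[t]'ht).val := by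
    intro s t hs ht hst
    exact Fin.le_def.mp (hsm.monotone (a := ⟨s, hs⟩) (b := ⟨t, ht⟩) hst)
  rw [Prod.mk.injEq] at hget
  obtain ⟨hga, hgb⟩ := hget
  have ha : a = L[n]'hnL := hga.symm
  have hmemS : ∀ (t : ℕ) (ht : t < L.length), L[t]'ht ∈ S := by
    intro t ht
    rw [← Finset.mem_sort (· ≤ ·)]
    exact List.getElem_mem ht
  have haS : a ∈ S := ha ▸ hmemS n hnL
  rcases Nat.lt_or_ge (n + 1) L.length with hcase | hcase
  · -- b = L[n+1]
    have hb : b = L[n+1]'hcase := by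
      rw [← hgb, hrot]
      congr 1
      exact Nat.mod_eq_of_lt hcase
    have hbS : b ∈ S := hb ▸ hmemS _ hcase
    refine ⟨haS, hbS, ?_⟩
    intro j hj
    obtain ⟨t, ht, hjt⟩ := List.mem_iff_getElem.1 (show j ∈ L from (Finset.mem_sort (· ≤ ·)).2 hj)
    have hab : a.val < b.val := by
      rw [ha, hb]
      exact Fin.lt_def.mp (hsm (a := ⟨n, hnL⟩) (b := ⟨n+1, hcase⟩) (Fin.mk_lt_mk.2 (Nat.lt_succ_self n)))
    have hor : j.val ≤ a.val ∨ b.val ≤ j.val := by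
      rcases le_or_gt t n with h | h
      · left; rw [ha, ← hjt]; exact hmono t n ht hnL h
      · right; rw [hb, ← hjt]; exact hmono (n+1) t hcase ht h
    have hak := a.isLt; have hbk := b.isLt; have hjk := j.isLt
    rw [weight_eq, weight_eq]
    split <;> split <;> omega
  · -- b = L[0], n = L.length - 1
    have h0 : 0 < L.length := by omega
    have hb : b = L[0]'h0 := by
      rw [← hgb, hrot]
      congr 1
      rw [show n + 1 = L.length by omega, Nat.mod_self]
    have hbS : b ∈ S := hb ▸ hmemS _ h0
    refine ⟨haS, hbS, ?_⟩
    intro j hj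
    obtain ⟨t, ht, hjt⟩ := List.mem_iff_getElem.1 (show j ∈ L from (Finset.mem_sort (· ≤ ·)).2 hj)
    have h1 : b.val ≤ j.val := by rw [hb, ← hjt]; exact hmono 0 t h0 ht (by omega)
    have h2 : j.val ≤ a.val := by rw [ha, ← hjt]; exact hmono t n ht hnL (by omega)
    have hak := a.isLt; have hbk := b.isLt; have hjk := j.isLt
    rw [weight_eq, weight_eq]
    split <;> split <;> omega

lemma cb_fst {k : ℕ} (S : Finset (Fin k)) :
    (circleBrakets k S).map Prod.fst = S.val := by
  have h : ((S.sort (· ≤ ·)).zip ((S.sort (· ≤ ·)).rotate 1)).map Prod.fst = S.sort (· ≤ ·) :=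
    List.map_fst_zip (by simp)
  unfold circleBrakets
  rw [Multiset.map_coe, h, Finset.sort_eq]

lemma cb_snd {k : ℕ} (S : Finset (Fin k)) :
    (circleBrakets k S).map Prod.snd = S.val := by
  have h : ((S.sort (· ≤ ·)).zip ((S.sort (· ≤ ·)).rotate 1)).map Prod.snd
      = (S.sort (· ≤ ·)).rotate 1 :=
    List.map_snd_zip (by simp)
  unfold circleBrakets
  rw [Multiset.map_coe, h, ← Finset.sort_eq S (· ≤ ·)]
  exact Multiset.coe_eq_coe.2 (List.rotate_perm _ 1)

lemma cb_nodup {k : ℕ} (S : Finset (Fin k)) : (circleBrakets k S).Nodup := by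
  have h : ((S.sort (· ≤ ·)).zip ((S.sort (· ≤ ·)).rotate 1)).map Prod.fst = S.sort (· ≤ ·) :=
    List.map_fst_zip (by simp)
  unfold circleBrakets
  rw [Multiset.coe_nodup]
  exact List.Nodup.of_map Prod.fst (by rw [h]; exact S.sort_nodup _)

lemma mem_greedy_one {k : ℕ} {x : Fin k → ℕ} {i : Fin k} :
    i ∈ greedySet k x 1 ↔ 1 ≤ x i := by
  simp [greedySet]

lemma filter_fst_card {α β : Type*} [DecidableEq α] (M : Multiset (α × β)) (i : α) :
    (M.filter (fun p => p.1 = i)).card = (M.map Prod.fst).count i := by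
  rw [Multiset.count_map]
  congr 1
  exact Multiset.filter_congr (fun p _ => eq_comm)

lemma filter_snd_card {α β : Type*} [DecidableEq β] (M : Multiset (α × β)) (i : β) :
    (M.filter (fun p => p.2 = i)).card = (M.map Prod.snd).count i := by
  rw [Multiset.count_map]
  congr 1
  exact Multiset.filter_congr (fun p _ => eq_comm)

lemma count_val {k : ℕ} (S : Finset (Fin k)) (i : Fin k) :
    S.val.count i = if i ∈ S then 1 else 0 := by
  split
  · exact Multiset.count_eq_one_of_mem S.nodup (by assumption)
  · exact Multiset.count_eq_zero.2 (by assumption)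

lemma cb_le {k : ℕ} {x : Fin k → ℕ} {C : Multiset (Fin k × Fin k)}
    (hinv : Invariant k x C) (hstab : Stable k C) :
    circleBrakets k (greedySet k x 1) ≤ C := by
  rw [Multiset.le_iff_count]
  intro p
  by_cases hp : p ∈ circleBrakets k (greedySet k x 1)
  · rw [Multiset.count_eq_one_of_mem (cb_nodup _) hp]
    rw [Nat.one_le_iff_ne_zero, Ne, Multiset.count_eq_zero, not_not]
    obtain ⟨a, b⟩ := p
    obtain ⟨h1, h2, h3⟩ := cb_mem_min hp
    exact pair_mem_of_min hinv hstab a b (mem_greedy_one.1 h1) (mem_greedy_one.1 h2)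
      (fun j hj => h3 j (mem_greedy_one.2 hj))
  · rw [Multiset.count_eq_zero.2 hp]; omega

lemma stab_peel {k : ℕ} {C D : Multiset (Fin k × Fin k)} (h : D ≤ C)
    (hstab : Stable k C) : Stable k D :=
  fun i j i' j' hle => hstab i j i' j' (le_trans hle h)

lemma inv_peel {k : ℕ} {x : Fin k → ℕ} {C : Multiset (Fin k × Fin k)}
    (hinv : Invariant k x C) (hle : circleBrakets k (greedySet k x 1) ≤ C) :
    Invariant k (fun i => x i - 1) (C - circleBrakets k (greedySet k x 1)) := by
  intro i
  set f := circleBrakets k (greedySet k x 1) with hf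
  have hC : (C - f) + f = C := tsub_add_cancel_of_le hle
  have hcnt : ∀ (g : Fin k × Fin k → Fin k), ((C - f).filter (fun p => g p = i)).card
      + (f.filter (fun p => g p = i)).card = (C.filter (fun p => g p = i)).card := by
    intro g
    rw [← hC, Multiset.filter_add, Multiset.card_add, hC]
  have hffst : (f.filter (fun p => p.1 = i)).card = if 1 ≤ x i then 1 else 0 := by
    rw [filter_fst_card, cb_fst, count_val]
    congr 1
    simp [mem_greedy_one]
  have hfsnd : (f.filter (fun p => p.2 = i)).card = if 1 ≤ x i then 1 else 0 := by
    rw [filter_snd_card, cb_snd, count_val]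
    congr 1
    simp [mem_greedy_one]
  have h1 := hcnt Prod.fst
  have h2 := hcnt Prod.snd
  rw [(hinv i).1] at h1
  rw [(hinv i).2] at h2
  constructor
  · by_cases h : 1 ≤ x i
    · rw [if_pos h] at hffst
      simp only
      omega
    · rw [if_neg h] at hffst
      simp only
      omega
  · by_cases h : 1 ≤ x i
    · rw [if_pos h] at hfsnd
      simp only
      omega
    · rw [if_neg h] at hfsnd
      simp only
      omega

lemma greedy_shift {k : ℕ} (x : Fin k → ℕ) (p : ℕ) (hp : 1 ≤ p) :
    greedySet k (fun i => x i - 1) p = greedySet k x (p + 1) := by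
  unfold greedySet
  ext i
  simp only [Finset.mem_filter, Finset.mem_univ, true_and]
  omega

lemma sup_shift {k : ℕ} (hk : 1 ≤ k) (x : Fin k → ℕ) :
    Finset.univ.sup (fun i => x i - 1) = Finset.univ.sup x - 1 := by
  have hne : (Finset.univ : Finset (Fin k)).Nonempty := ⟨⟨0, hk⟩, Finset.mem_univ _⟩
  apply le_antisymm
  · apply Finset.sup_le
    intro i _
    have := Finset.le_sup (f := x) (Finset.mem_univ i)
    omega
  · obtain ⟨i, _, hi⟩ := Finset.exists_mem_eq_sup Finset.univ hne x
    have h2 : x i - 1 ≤ Finset.univ.sup (fun i => x i - 1) :=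
      Finset.le_sup (f := fun i => x i - 1) (Finset.mem_univ i)
    omega

lemma U_rec {k : ℕ} (hk : 1 ≤ k) (x : Fin k → ℕ) (hq : 1 ≤ Finset.univ.sup x) :
    U k x = circleBrakets k (greedySet k x 1) + U k (fun i => x i - 1) := by
  unfold U
  rw [sup_shift hk x]
  set q := Finset.univ.sup x with hqd
  have h1 : Finset.Icc 1 q = insert 1 (Finset.Icc 2 q) := by
    ext m
    simp only [Finset.mem_Icc, Finset.mem_insert]
    omega
  rw [h1, Finset.sum_insert (by simp [Finset.mem_Icc])]
  congr 1
  have h2 : Finset.Icc 2 q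
      = Finset.map ⟨fun p => p + 1, add_left_injective 1⟩ (Finset.Icc 1 (q - 1)) := by
    ext m
    simp only [Finset.mem_Icc, Finset.mem_map, Function.Embedding.coeFn_mk]
    constructor
    · intro h; exact ⟨m - 1, by omega, by omega⟩
    · rintro ⟨a, ha, rfl⟩; omega
  rw [h2, Finset.sum_map]
  apply Finset.sum_congr rfl
  intro p hp
  simp only [Function.Embedding.coeFn_mk]
  rw [greedy_shift x p (by simp [Finset.mem_Icc] at hp; omega)]

/-- Any stable configuration satisfying the braket invariant with respect to `x`
equals `U(x)`, the multiset union of the circle braket multisets of the greedy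
independent sets of `x`. -/
theorem stmt5 (k : ℕ) (hk : 1 ≤ k) (x : Fin k → ℕ)
    (C : Multiset (Fin k × Fin k))
    (hinv : Invariant k x C) (hstab : Stable k C) :
    C = U k x := by
  have base : ∀ (x : Fin k → ℕ) (C : Multiset (Fin k × Fin k)),
      Finset.univ.sup x = 0 → Invariant k x C → C = U k x := by
    intro x C hq hinv
    have hx : ∀ i, x i = 0 := fun i =>
      Nat.le_zero.1 (hq ▸ Finset.le_sup (f := x) (Finset.mem_univ i))
    have hC : C = 0 := by
      rw [Multiset.eq_zero_iff_forall_notMem]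
      intro p hp
      have h1 := (hinv p.1).1
      have hmem : p ∈ C.filter (fun q => q.1 = p.1) := Multiset.mem_filter.2 ⟨hp, rfl⟩
      have hpos : 0 < (C.filter (fun q => q.1 = p.1)).card :=
        Multiset.card_pos.2 (fun h => by rw [h] at hmem; simp at hmem)
      rw [h1, hx p.1] at hpos
      omega
    rw [hC]
    unfold U
    rw [hq]
    simp
  have main : ∀ (q : ℕ) (x : Fin k → ℕ) (C : Multiset (Fin k × Fin k)),
      Finset.univ.sup x ≤ q → Invariant k x C → Stable k C → C = U k x := by
    intro q
    induction q with
    | zero =>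
      intro x C hq hinv _
      exact base x C (Nat.le_zero.1 hq) hinv
    | succ q ih =>
      intro x C hq hinv hstab
      by_cases h0 : Finset.univ.sup x = 0
      · exact base x C h0 hinv
      · have h1 : 1 ≤ Finset.univ.sup x := Nat.pos_of_ne_zero h0
        have hle := cb_le hinv hstab
        have hsup : Finset.univ.sup (fun i => x i - 1) ≤ q := by
          rw [sup_shift hk x]; omega
        have hC' := ih (fun i => x i - 1) (C - circleBrakets k (greedySet k x 1)) hsup
          (inv_peel hinv hle) (stab_peel (Multiset.sub_le_self _ _) hstab)
        rw [U_rec hk x h1, ← hC']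
        rw [add_comm]
        exact (tsub_add_cancel_of_le hle).symm
  exact main (Finset.univ.sup x) x C le_rfl hinv hstab
end

section
/- Let k ≥ 1 and x : Fin k → ℕ with max_i x i ≥ 1. Let M = {μ_0 < μ_1 < ⋯ < μ_{r−1}} be the set of colors attaining the maximum of x, and assume r ≥ 2. Then every braket (i,j) occurring in U(x) = Σ_{p=1}^{q} f(G_p) lies within one of the circular arcs between consecutive majority colors: there exists s < r such that [(i − μ_s) mod k] + [(j − i) mod k] ≤ [(μ_{(s+1) mod r} − μ_s) mod k], where each bracket denotes the representative in {0,…,k−1} of the given integer modulo k (equivalently, the modulo range [i,j]_k is contained in [μ_s, μ_{(s+1) mod r}]_k). -/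
/-- The `s`-th element (in increasing order) of a finite set `M ⊆ Fin k`. -/
def nth (k : ℕ) (M : Finset (Fin k)) (s : Fin M.card) : Fin k :=
  (M.orderIsoOfFin rfl s).val

/-!
Every majority color has the maximal count `q`, so it belongs to every greedy set `G_p`.
A braket `(i, j)` of `f(G_p)` joins `i` to its cyclic successor `j` in `G_p`. Let `μ` be the
majority color closest to `i` going backwards around the circle and `ν` the next majority
color after `μ`. Then `i` lies on the arc from `μ` to `ν`, and since `ν ∈ G_p` the successor
`j` of `i` comes no later than `ν`.
-/

/-- The bracket `[(b − a) mod k]` of the statement: the circular distance from `a` forward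
to `b`. -/
def circDist (k : ℕ) (a b : Fin k) : ℕ := (b.val + k - a.val) % k

section

variable {k : ℕ}

lemma circDist_eq (a b : Fin k) :
    circDist k a b = if a ≤ b then b.val - a.val else b.val + k - a.val := by
  have := a.isLt
  unfold circDist
  split_ifs with h
  · rw [Fin.le_def] at h
    rw [show b.val + k - a.val = b.val - a.val + k by omega, Nat.add_mod_right,
      Nat.mod_eq_of_lt (by omega)]
  · exact Nat.mod_eq_of_lt (by omega)

lemma circDist_eq_zero_iff {a b : Fin k} : circDist k a b = 0 ↔ a = b := by
  have := a.isLt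
  rw [circDist_eq, Fin.ext_iff]
  split_ifs with h <;> rw [Fin.le_def] at h <;> omega

/-- If `μ` is at least as close behind `i` as `ν ≠ μ` is, then `i` lies on the arc from `μ`
to `ν`. -/
lemma circDist_add_circDist_of_le {μ ν i : Fin k} (hμν : μ ≠ ν)
    (h : circDist k μ i ≤ circDist k ν i) :
    circDist k μ i + circDist k i ν = circDist k μ ν := by
  have := μ.isLt
  rw [Ne, Fin.ext_iff] at hμν
  simp only [circDist_eq, Fin.le_def] at h ⊢
  split_ifs at h ⊢ <;> omega

lemma circDist_getElem_succ_le {L : List (Fin k)} (hL : L.Pairwise (· < ·)) {t u : ℕ}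
    (ht : t < L.length) (hu : u < L.length) (hne : u ≠ t) :
    circDist k L[t] (L[(t + 1) % L.length]'(Nat.mod_lt _ (by omega))) ≤
      circDist k L[t] L[u] := by
  have hlt : ∀ a b (ha : a < L.length) (hb : b < L.length), a < b → L[a].val < L[b].val :=
    fun a b ha hb hab => List.pairwise_iff_getElem.mp hL a b ha hb hab
  have hle : ∀ a b (ha : a < L.length) (hb : b < L.length), a ≤ b →
      L[a].val ≤ L[b].val := by
    intro a b ha hb hab
    rcases hab.lt_or_eq with hab | rfl
    exacts [(hlt a b ha hb hab).le, le_rfl]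
  have := L[t].isLt
  rcases Nat.lt_or_ge (t + 1) L.length with hnext | hlast
  · simp only [Nat.mod_eq_of_lt hnext]
    have := hlt t (t + 1) ht hnext (by omega)
    rcases Nat.lt_or_ge u t with hut | hut
    · have := hlt u t hu ht hut
      simp only [circDist_eq, Fin.le_def]
      split_ifs <;> omega
    · have := hle (t + 1) u hnext hu (by omega)
      simp only [circDist_eq, Fin.le_def]
      split_ifs <;> omega
  · have hwrap : (t + 1) % L.length = 0 := by
      rw [show t + 1 = L.length by omega, Nat.mod_self]
    simp only [hwrap]
    have := hle 0 u (by omega) hu (Nat.zero_le u)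
    have := hlt u t hu ht (by omega)
    simp only [circDist_eq, Fin.le_def]
    split_ifs <;> omega

lemma exists_getElem_of_mem_circleBrakets {S : Finset (Fin k)} {b : Fin k × Fin k}
    (h : b ∈ circleBrakets k S) :
    ∃ (t : ℕ) (ht : t < (S.sort (· ≤ ·)).length), b.1 = (S.sort (· ≤ ·))[t] ∧
      b.2 = (S.sort (· ≤ ·))[(t + 1) % (S.sort (· ≤ ·)).length]'
        (Nat.mod_lt _ (by omega)) := by
  obtain ⟨t, ht, rfl⟩ := List.mem_iff_getElem.mp (Multiset.mem_coe.mp h)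
  have ht' : t < (S.sort (· ≤ ·)).length := by simpa using ht
  refine ⟨t, ht', ?_, ?_⟩ <;> simp [List.getElem_zip, List.getElem_rotate]

/-- The ket of a braket of `f(S)` is the cyclic successor of its bra in `S`. -/
lemma circDist_le_of_mem_circleBrakets {S : Finset (Fin k)} {b : Fin k × Fin k}
    (hb : b ∈ circleBrakets k S) {c : Fin k} (hc : c ∈ S) (hcb : c ≠ b.1) :
    circDist k b.1 b.2 ≤ circDist k b.1 c := by
  obtain ⟨t, ht, hb₁, hb₂⟩ := exists_getElem_of_mem_circleBrakets hb
  obtain ⟨u, hu, rfl⟩ := List.mem_iff_getElem.mp ((Finset.mem_sort (· ≤ ·)).mpr hc)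
  rw [hb₁, hb₂]
  refine circDist_getElem_succ_le (Finset.sortedLT_sort S).pairwise ht hu ?_
  rintro rfl
  exact hcb hb₁.symm

lemma filter_eq_sup_subset_greedySet (x : Fin k → ℕ) {p : ℕ}
    (hp : p ≤ Finset.univ.sup x) :
    Finset.univ.filter (fun i => x i = Finset.univ.sup x) ⊆ greedySet k x p := by
  intro i hi
  rw [Finset.mem_filter] at hi
  exact Finset.mem_filter.mpr ⟨Finset.mem_univ i, hi.2 ▸ hp⟩

lemma nth_mem (M : Finset (Fin k)) (s : Fin M.card) : nth k M s ∈ M :=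
  (M.orderIsoOfFin rfl s).2

lemma nth_injective (M : Finset (Fin k)) : Function.Injective (nth k M) :=
  Subtype.val_injective.comp (M.orderIsoOfFin rfl).injective

lemma succ_mod_ne_self {s n : ℕ} (hs : s < n) (hn : 2 ≤ n) : (s + 1) % n ≠ s := by
  rcases Nat.lt_or_ge (s + 1) n with h | h
  · rw [Nat.mod_eq_of_lt h]; omega
  · rw [show s + 1 = n by omega, Nat.mod_self]; omega

end

/-- Every braket `(i,j)` occurring in `U(x)` lies within one of the circular
arcs between consecutive majority colors `μ_s, μ_{(s+1) mod r}`, where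
`M = {μ_0 < … < μ_{r−1}}` is the set of colors attaining the maximum of `x`. -/
theorem stmt9 (k : ℕ) (x : Fin k → ℕ)
    (M : Finset (Fin k))
    (hM : M = Finset.univ.filter (fun i => x i = Finset.univ.sup x))
    (hr : 2 ≤ M.card) :
    ∀ p ∈ U k x,
      ∃ s : ℕ, ∃ hs : s < M.card,
        ((p : Fin k × Fin k).1.val + k - (nth k M ⟨s, hs⟩).val) % k +
            ((p : Fin k × Fin k).2.val + k - (p : Fin k × Fin k).1.val) % k ≤
          ((nth k M ⟨(s + 1) % M.card, Nat.mod_lt _ (by omega)⟩).val + k -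
              (nth k M ⟨s, hs⟩).val) % k := by
  intro b hb
  obtain ⟨p, hp, hbp⟩ := Multiset.mem_sum.mp hb
  have hMG : M ⊆ greedySet k x p :=
    hM ▸ filter_eq_sup_subset_greedySet x (Finset.mem_Icc.mp hp).2
  have : Nonempty (Fin M.card) := ⟨⟨0, by omega⟩⟩
  obtain ⟨s, hs⟩ := Finite.exists_min (fun s => circDist k (nth k M s) b.1)
  set s' : Fin M.card := ⟨(s + 1) % M.card, Nat.mod_lt _ (by omega)⟩
  set μ := nth k M s
  set ν := nth k M s'
  have hμν : μ ≠ ν :=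
    (nth_injective M).ne fun h => succ_mod_ne_self s.isLt hr (Fin.ext_iff.mp h).symm
  have harc := circDist_add_circDist_of_le hμν (hs s')
  have hνb : ν ≠ b.1 := by
    rintro hνb
    have := hs s'
    rw [← hνb, circDist_eq_zero_iff.mpr rfl, Nat.le_zero, circDist_eq_zero_iff] at this
    exact hμν this
  have hket : circDist k b.1 b.2 ≤ circDist k b.1 ν :=
    circDist_le_of_mem_circleBrakets hbp (hMG (nth_mem M s')) hνb
  refine ⟨s, s.isLt, ?_⟩
  change circDist k μ b.1 + circDist k b.1 b.2 ≤ circDist k μ ν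
  omega
end

section
/- Let k ≥ 1, let L be a finite type with |L| ≤ k, and let f : L → Fin k. Suppose a, b ∈ L with a ≠ b satisfy f a = f b, and let f' = Function.update f a (f a + 1), where the addition is in Fin k (increment modulo k). Then R(f') < R(f). -/
/-- `m_d(f)`: the number of `a ∈ L` with `f a = d`. -/
def mcount {L : Type*} [Fintype L] {k : ℕ} (f : L → Fin k) (d : Fin k) : ℕ :=
  (Finset.univ.filter (fun a => f a = d)).card

/-- `g_d(f)`: the minimum, over unoccupied labels `h` (those with `m_h(f) = 0`),
of the representative in `{0,…,k−1}` of `(h − d) mod k`; `0` if every label is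
occupied. -/
def gval {L : Type*} [Fintype L] {k : ℕ} (f : L → Fin k) (d : Fin k) : ℕ :=
  if h : (Finset.univ.filter (fun h' : Fin k => mcount f h' = 0)).Nonempty then
    (Finset.univ.filter (fun h' : Fin k => mcount f h' = 0)).inf' h
      (fun h' => (h'.val + k - d.val) % k)
  else 0

/-- The potential `R(f) = Σ_d (k² + g_d(f)) · n_d(f)`, where
`n_d(f) = m_d(f) − 1` (truncated subtraction). -/
def Rpot {L : Type*} [Fintype L] {k : ℕ} (f : L → Fin k) : ℕ :=
  ∑ d : Fin k, (k ^ 2 + gval f d) * (mcount f d - 1)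

section helpers

variable {L : Type*} [Fintype L] [DecidableEq L] {k : ℕ}

lemma sum_mcount (f : L → Fin k) : ∑ d : Fin k, mcount f d = Fintype.card L := by
  classical
  rw [← Finset.card_univ,
    Finset.card_eq_sum_card_fiberwise (f := f) (t := Finset.univ)
      (fun x _ => Finset.mem_univ _)]
  rfl

lemma gval_lt (f : L → Fin k) (d : Fin k) (hk : 0 < k) : gval f d < k := by
  unfold gval
  split_ifs with h
  · obtain ⟨h0, hh0, heq⟩ := Finset.exists_mem_eq_inf' h
      (fun h' : Fin k => (h'.val + k - d.val) % k)
    rw [heq]; exact Nat.mod_lt _ hk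
  · exact hk

lemma filter_update_ne (f : L → Fin k) (a : L) (v d : Fin k) (hd : d ≠ v) :
    Finset.univ.filter (fun x => Function.update f a v x = d)
      = (Finset.univ.filter (fun x => f x = d)).erase a := by
  ext x
  simp only [Finset.mem_erase, Finset.mem_filter, Finset.mem_univ, true_and]
  rcases eq_or_ne x a with rfl | hx
  · simp [Function.update_self, Ne.symm hd]
  · simp [Function.update_of_ne hx, hx]

lemma filter_update_eq (f : L → Fin k) (a : L) (v : Fin k) :
    Finset.univ.filter (fun x => Function.update f a v x = v)
      = insert a (Finset.univ.filter (fun x => f x = v)) := by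
  ext x
  simp only [Finset.mem_insert, Finset.mem_filter, Finset.mem_univ, true_and]
  rcases eq_or_ne x a with rfl | hx
  · simp [Function.update_self]
  · simp [Function.update_of_ne hx, hx]

lemma mcount_update_orig (f : L → Fin k) (a : L) (v : Fin k) (hv : v ≠ f a) :
    mcount (Function.update f a v) (f a) = mcount f (f a) - 1 := by
  unfold mcount
  rw [filter_update_ne f a v (f a) (Ne.symm hv)]
  exact Finset.card_erase_of_mem (by simp)

lemma mcount_update_new (f : L → Fin k) (a : L) (v : Fin k) (hv : v ≠ f a) :
    mcount (Function.update f a v) v = mcount f v + 1 := by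
  unfold mcount
  rw [filter_update_eq f a v]
  exact Finset.card_insert_of_notMem (by simp [Ne.symm hv])

lemma mcount_update_other (f : L → Fin k) (a : L) (v d : Fin k) (hd : d ≠ v)
    (hd' : d ≠ f a) : mcount (Function.update f a v) d = mcount f d := by
  unfold mcount
  rw [filter_update_ne f a v d hd, Finset.erase_eq_of_notMem (by simp [Ne.symm hd'])]

lemma mod_pred {k x : ℕ} (hk : 0 < k) (hx : x % k ≠ 0) : (x - 1) % k = x % k - 1 := by
  have h := Nat.div_add_mod x k
  have hr : x % k < k := Nat.mod_lt _ hk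
  have h1 : x - 1 = k * (x / k) + (x % k - 1) := by omega
  rw [h1, Nat.mul_add_mod]
  exact Nat.mod_eq_of_lt (by omega)

lemma wval_ne_zero {k : ℕ} (h0 c : Fin k) (hne : h0 ≠ c) :
    (h0.val + k - c.val) % k ≠ 0 := by
  intro h
  obtain ⟨m, hm⟩ := Nat.dvd_of_mod_eq_zero h
  have h1 : h0.val < k := h0.isLt
  have h2 : c.val < k := c.isLt
  have h3 : h0.val ≠ c.val := fun h => hne (Fin.ext h)
  have hk : 0 < k := by omega
  have hm2 : k * m < k * 2 := by
    rw [← hm]; omega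
  have hmlt : m < 2 := Nat.lt_of_mul_lt_mul_left hm2
  have hm0 : m ≠ 0 := by rintro rfl; simp at hm; omega
  have hme : m = 1 := by omega
  subst hme
  omega

lemma arith_eq (G1 G2 X n1 n2 : ℕ) (h1 : 2 ≤ n1) (h2 : 1 ≤ n2) :
    X + (G1 * (n1 - 1 - 1) + G2 * (n2 + 1 - 1)) + G1
      = X + (G1 * (n1 - 1) + G2 * (n2 - 1)) + G2 := by
  obtain ⟨m, rfl⟩ : ∃ m, n1 = m + 2 := ⟨n1 - 2, by omega⟩
  obtain ⟨p, rfl⟩ : ∃ p, n2 = p + 1 := ⟨n2 - 1, by omega⟩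
  have e1 : m + 2 - 1 - 1 = m := by omega
  have e2 : m + 2 - 1 = m + 1 := by omega
  have e3 : p + 1 + 1 - 1 = p + 1 := by omega
  have e4 : p + 1 - 1 = p := by omega
  rw [e1, e2, e3, e4]
  ring

lemma gval_succ_lt [NeZero k] (f : L → Fin k) (c : Fin k) (hk : 1 < k)
    (hU : (Finset.univ.filter (fun h' : Fin k => mcount f h' = 0)).Nonempty)
    (hc : mcount f c ≠ 0) (hc' : mcount f (c + 1) ≠ 0) :
    gval f (c + 1) < gval f c := by
  have hkpos : 0 < k := by omega
  obtain ⟨h0, hh0, heq⟩ := Finset.exists_mem_eq_inf' hU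
    (fun h' : Fin k => (h'.val + k - c.val) % k)
  have hh0mem := hh0
  rw [Finset.mem_filter] at hh0mem
  have h0c : h0 ≠ c := fun h => hc (h ▸ hh0mem.2)
  have h0c' : h0 ≠ c + 1 := fun h => hc' (h ▸ hh0mem.2)
  have hwc : (h0.val + k - c.val) % k ≠ 0 := wval_ne_zero h0 c h0c
  have hval1 : ((1 : Fin k) : ℕ) = 1 := by
    rw [Fin.val_one']; exact Nat.mod_eq_of_lt hk
  have hvalc' : ((c + 1 : Fin k) : ℕ) = (c.val + 1) % k := by
    rw [Fin.val_add, hval1]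
  have key : (h0.val + k - ((c + 1 : Fin k) : ℕ)) % k + 1 = (h0.val + k - c.val) % k := by
    by_cases hC : c.val + 1 < k
    · -- c.val + 1 < k
      have hv : ((c + 1 : Fin k) : ℕ) = c.val + 1 := by
        rw [hvalc']; exact Nat.mod_eq_of_lt hC
      rw [hv]
      have h1 : h0.val + k - (c.val + 1) = (h0.val + k - c.val) - 1 := by omega
      rw [h1, mod_pred hkpos hwc]
      omega
    · -- c.val + 1 = k
      have hC' : c.val + 1 = k := by have := c.isLt; omega
      have hc0 : ((c + 1 : Fin k) : ℕ) = 0 := by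
        rw [hvalc', hC', Nat.mod_self]
      rw [hc0]
      have h0lt : h0.val < k := h0.isLt
      have h0ne : h0.val ≠ c.val := fun hh => h0c (Fin.ext hh)
      have e1 : (h0.val + k - 0) % k = h0.val := by
        rw [Nat.sub_zero, Nat.add_mod_right]; exact Nat.mod_eq_of_lt h0lt
      have e2 : (h0.val + k - c.val) % k = h0.val + 1 := by
        have hxx : h0.val + k - c.val = h0.val + 1 := by omega
        rw [hxx]; exact Nat.mod_eq_of_lt (by omega)
      rw [e1, e2]
  unfold gval
  rw [dif_pos hU, dif_pos hU, heq]
  have hle : Finset.inf' _ hU (fun h' : Fin k => (h'.val + k - ((c + 1 : Fin k) : ℕ)) % k)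
      ≤ (h0.val + k - ((c + 1 : Fin k) : ℕ)) % k := Finset.inf'_le _ hh0
  omega

end helpers

/-- If `|L| ≤ k` and two distinct elements `a ≠ b` share the label `f a = f b`,
then incrementing the label of `a` modulo `k` strictly decreases `R`. -/
theorem stmt11 (k : ℕ) [NeZero k] (L : Type*) [Fintype L] [DecidableEq L]
    (hcard : Fintype.card L ≤ k) (f : L → Fin k)
    (a b : L) (hab : a ≠ b) (hfab : f a = f b) :
    Rpot (Function.update f a (f a + 1)) < Rpot f := by
  classical
  set f' := Function.update f a (f a + 1) with hf'
  have hk2 : 2 ≤ k := by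
    have h1 : 1 < Fintype.card L := Fintype.one_lt_card_iff.mpr ⟨a, b, hab⟩
    omega
  have hkpos : 0 < k := by omega
  have hcc' : f a + 1 ≠ f a := by
    intro h
    have h1 : (1 : Fin k) = 0 := by
      have := congrArg (fun x => x - f a) h
      simpa using this
    have h2 := congrArg Fin.val h1
    rw [Fin.val_one', Fin.val_zero, Nat.mod_eq_of_lt hk2] at h2
    exact one_ne_zero h2
  -- mcount facts
  have h2c : 2 ≤ mcount f (f a) := by
    have hsub : ({a, b} : Finset L) ⊆ Finset.univ.filter (fun x => f x = f a) := by
      intro x hx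
      simp only [Finset.mem_insert, Finset.mem_singleton] at hx
      rcases hx with rfl | rfl <;> simp [hfab.symm]
    calc 2 = ({a, b} : Finset L).card := (Finset.card_pair hab).symm
      _ ≤ _ := Finset.card_le_card hsub
  have hm'c : mcount f' (f a) = mcount f (f a) - 1 :=
    mcount_update_orig f a (f a + 1) hcc'
  have hm'c' : mcount f' (f a + 1) = mcount f (f a + 1) + 1 :=
    mcount_update_new f a (f a + 1) hcc'
  have hm'd : ∀ d, d ≠ f a → d ≠ f a + 1 → mcount f' d = mcount f d :=
    fun d h1 h2 => mcount_update_other f a (f a + 1) d h2 h1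
  have hUne : (Finset.univ.filter fun h' : Fin k => mcount f h' = 0).Nonempty := by
    by_contra h
    rw [Finset.not_nonempty_iff_eq_empty, Finset.filter_eq_empty_iff] at h
    have hlt : ∑ _d : Fin k, (1 : ℕ) < ∑ d : Fin k, mcount f d := by
      apply Finset.sum_lt_sum
      · exact fun d _ => Nat.one_le_iff_ne_zero.mpr (h (Finset.mem_univ d))
      · exact ⟨f a, Finset.mem_univ _, by omega⟩
    rw [sum_mcount] at hlt
    simp only [Finset.sum_const, Finset.card_univ, Fintype.card_fin, smul_eq_mul,
      mul_one] at hlt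
    omega
  by_cases hocc : mcount f (f a + 1) = 0
  · -- Case 2: the incremented label was unoccupied
    have hS : ∑ d : Fin k, (mcount f' d - 1) ≤ k := by
      calc ∑ d : Fin k, (mcount f' d - 1) ≤ ∑ d : Fin k, mcount f' d :=
            Finset.sum_le_sum (fun d _ => Nat.sub_le _ _)
        _ = Fintype.card L := sum_mcount f'
        _ ≤ k := hcard
    have hT : ∑ d : Fin k, (mcount f' d - 1) + 1 ≤ ∑ d : Fin k, (mcount f d - 1) := by
      have : ∑ d : Fin k, (mcount f' d - 1) < ∑ d : Fin k, (mcount f d - 1) := by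
        apply Finset.sum_lt_sum
        · intro d _
          rcases eq_or_ne d (f a) with rfl | h1
          · rw [hm'c]; omega
          rcases eq_or_ne d (f a + 1) with rfl | h2
          · rw [hm'c', hocc]
          · rw [hm'd d h1 h2]
        · exact ⟨f a, Finset.mem_univ _, by rw [hm'c]; omega⟩
      omega
    have hR' : Rpot f' ≤ (k ^ 2 + (k - 1)) * ∑ d : Fin k, (mcount f' d - 1) := by
      rw [Finset.mul_sum]
      apply Finset.sum_le_sum
      intro d _
      have := gval_lt f' d hkpos
      exact Nat.mul_le_mul_right _ (by omega)
    have hRf : k ^ 2 * ∑ d : Fin k, (mcount f d - 1) ≤ Rpot f := by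
      rw [Finset.mul_sum]
      exact Finset.sum_le_sum (fun d _ => Nat.mul_le_mul_right _ (by omega))
    set S := ∑ d : Fin k, (mcount f' d - 1) with hSdef
    have hmain : (k ^ 2 + (k - 1)) * S < k ^ 2 * (S + 1) := by
      have h1 : (k - 1) * S ≤ (k - 1) * k := Nat.mul_le_mul_left _ hS
      have h2 : (k - 1) * k < k * k := by
        apply Nat.mul_lt_mul_of_lt_of_le (by omega) (le_refl k) hkpos
      nlinarith [sq_nonneg k]
    calc Rpot f' ≤ (k ^ 2 + (k - 1)) * S := hR'
      _ < k ^ 2 * (S + 1) := hmain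
      _ ≤ k ^ 2 * ∑ d : Fin k, (mcount f d - 1) := Nat.mul_le_mul_left _ hT
      _ ≤ Rpot f := hRf
  · -- Case 1: the incremented label was occupied
    have hU' : (Finset.univ.filter fun h' : Fin k => mcount f' h' = 0)
        = Finset.univ.filter fun h' : Fin k => mcount f h' = 0 := by
      ext d
      simp only [Finset.mem_filter, Finset.mem_univ, true_and]
      rcases eq_or_ne d (f a) with rfl | h1
      · rw [hm'c]; omega
      rcases eq_or_ne d (f a + 1) with rfl | h2
      · rw [hm'c']; omega
      · rw [hm'd d h1 h2]
    have hg : ∀ d, gval f' d = gval f d := by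
      intro d
      unfold gval
      simp only [hU']
    have hglt : gval f (f a + 1) < gval f (f a) :=
      gval_succ_lt f (f a) hk2 hUne (by omega) hocc
    -- sum splitting
    have hpair : ({f a, f a + 1} : Finset (Fin k)) ⊆ Finset.univ :=
      Finset.subset_univ _
    have hsplit : ∀ g : Fin k → ℕ, ∑ d : Fin k, g d
        = ∑ d ∈ Finset.univ \ {f a, f a + 1}, g d + (g (f a) + g (f a + 1)) := by
      intro g
      rw [← Finset.sum_pair (Ne.symm hcc'), Finset.sum_sdiff hpair]
    have hRe : Rpot f' + (k ^ 2 + gval f (f a)) = Rpot f + (k ^ 2 + gval f (f a + 1)) := by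
      unfold Rpot
      rw [hsplit (fun d => (k ^ 2 + gval f' d) * (mcount f' d - 1)),
        hsplit (fun d => (k ^ 2 + gval f d) * (mcount f d - 1))]
      have hrest : ∑ d ∈ Finset.univ \ {f a, f a + 1},
          (k ^ 2 + gval f' d) * (mcount f' d - 1)
          = ∑ d ∈ Finset.univ \ {f a, f a + 1},
          (k ^ 2 + gval f d) * (mcount f d - 1) := by
        apply Finset.sum_congr rfl
        intro d hd
        simp only [Finset.mem_sdiff, Finset.mem_insert, Finset.mem_singleton] at hd
        rw [hg, hm'd d (fun h => hd.2 (Or.inl h)) (fun h => hd.2 (Or.inr h))]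
      rw [hrest, hg, hg, hm'c, hm'c']
      exact arith_eq _ _ _ _ _ h2c (Nat.one_le_iff_ne_zero.mpr hocc)
    omega
end

section
/- Let k ≥ 1 and let L be a finite type with |L| ≤ k. Define a step relation on labelings L → Fin k by: f ⟶ f' if there exist a, b ∈ L with a ≠ b, f a = f b, and f' = Function.update f a (f a + 1), where addition is in Fin k (increment modulo k). Then there is no infinite sequence f₀ ⟶ f₁ ⟶ f₂ ⟶ ⋯; in particular, every labeling from which no step applies is injective, so every maximal sequence of such steps terminates in an injective labeling. -/
/-- One step of the label-increment process: some two distinct elements `a ≠ b`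
share a label, and the label of `a` is incremented modulo `k`. -/
def OrdStep {L : Type*} [DecidableEq L] {k : ℕ} [NeZero k]
    (f f' : L → Fin k) : Prop :=
  ∃ a b : L, a ≠ b ∧ f a = f b ∧ f' = Function.update f a (f a + 1)

section Aux
variable {k : ℕ} [NeZero k] {L : Type*} [Fintype L] [DecidableEq L]
open Fin.NatCast Fin.CommRing

/-- empty sites -/
def emp (f : L → Fin k) : Finset (Fin k) := (Finset.image f Finset.univ)ᶜ

open Classical in
noncomputable def ddE (E : Finset (Fin k)) (v : Fin k) : ℕ :=
  if h : ∃ j : ℕ, 0 < j ∧ v + (j : Fin k) ∈ E then Nat.find h else 0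

/-- distance forward to nearest empty site -/
noncomputable def dd (f : L → Fin k) (v : Fin k) : ℕ := ddE (emp f) v

lemma exists_dd (f : L → Fin k) (v : Fin k) (h : (emp f).Nonempty) :
    ∃ j, 0 < j ∧ j ≤ k ∧ v + (j : Fin k) ∈ emp f := by
  obtain ⟨w, hw⟩ := h
  by_cases hwv : w = v
  · refine ⟨k, Nat.pos_of_ne_zero (NeZero.ne k), le_refl k, ?_⟩
    have : ((k : ℕ) : Fin k) = 0 := Fin.natCast_self k
    rw [this, add_zero, ← hwv]; exact hw
  · refine ⟨(w - v).val, ?_, le_of_lt (w - v).isLt, ?_⟩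
    · refine Nat.pos_of_ne_zero fun h0 => hwv ?_
      have : w - v = 0 := by
        apply Fin.ext
        simp [h0]
      have := sub_eq_zero.mp this
      exact this
    · have h1 : ((w - v).val : Fin k) = w - v := Fin.cast_val_eq_self _
      rw [h1]
      have : v + (w - v) = w := by ring
      rw [this]; exact hw

lemma dd_le (f : L → Fin k) (v : Fin k) : dd f v ≤ k := by
  unfold dd ddE
  split
  · next h =>
    have hc := h
    obtain ⟨j, hj, hmem⟩ := hc
    have hne : (emp f).Nonempty := ⟨_, hmem⟩
    obtain ⟨j0, hj0, hj0k, hm0⟩ := exists_dd f v hne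
    exact le_trans (Nat.find_le ⟨hj0, hm0⟩) hj0k
  · next => exact Nat.zero_le k

lemma dd_step (f : L → Fin k) (v : Fin k) (hne : (emp f).Nonempty)
    (hocc : v + 1 ∉ emp f) : dd f (v + 1) + 1 = dd f v := by
  obtain ⟨j0, hj0, hj0k, hm0⟩ := exists_dd f v hne
  have h : ∃ j : ℕ, 0 < j ∧ v + (j : Fin k) ∈ emp f := ⟨j0, hj0, hm0⟩
  obtain ⟨j1, hj1, hj1k, hm1⟩ := exists_dd f (v + 1) hne
  have h' : ∃ j : ℕ, 0 < j ∧ (v + 1) + (j : Fin k) ∈ emp f := ⟨j1, hj1, hm1⟩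
  have e1 : dd f v = Nat.find h := by unfold dd ddE; rw [dif_pos h]
  have e2 : dd f (v + 1) = Nat.find h' := by unfold dd ddE; rw [dif_pos h']
  have hfind1 : 0 < Nat.find h := (Nat.find_spec h).1
  have hne1 : Nat.find h ≠ 1 := by
    intro h1
    have := (Nat.find_spec h).2
    rw [h1] at this
    simp only [Nat.cast_one] at this
    exact hocc this
  have h2 : 2 ≤ Nat.find h := by omega
  obtain ⟨m, hm⟩ : ∃ m, Nat.find h = m + 1 := ⟨Nat.find h - 1, by omega⟩
  have key1 : Nat.find h' ≤ m := by
    apply Nat.find_le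
    constructor
    · omega
    · have heq2 : (v + 1) + ((m : ℕ) : Fin k) = v + ((Nat.find h : ℕ) : Fin k) := by
        rw [hm, Nat.cast_add, Nat.cast_one]
        ring
      rw [heq2]
      exact (Nat.find_spec h).2
  have key2 : Nat.find h ≤ Nat.find h' + 1 := by
    apply Nat.find_le
    constructor
    · omega
    · have : v + ((Nat.find h' + 1 : ℕ) : Fin k) = (v + 1) + ((Nat.find h' : ℕ) : Fin k) := by
        rw [Nat.cast_add, Nat.cast_one]; ring
      rw [this]
      exact (Nat.find_spec h').2
  omega

lemma dd_congr {f f' : L → Fin k}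
    (h : Finset.image f Finset.univ = Finset.image f' Finset.univ) : dd f = dd f' := by
  have hemp : emp f = emp f' := by unfold emp; rw [h]
  funext v
  unfold dd
  rw [hemp]

/-- the measure -/
noncomputable def M (f : L → Fin k) : ℕ :=
  (k + 1) * Fintype.card L * (k - (Finset.image f Finset.univ).card)
    + ∑ x : L, dd f (f x)

lemma M_lt (hcard : Fintype.card L ≤ k) {f f' : L → Fin k} (h : OrdStep f f') :
    M f' < M f := by
  obtain ⟨a, b, hab, heq, hupd⟩ := h
  subst hupd
  set S := Finset.image f Finset.univ with hS
  set g := Function.update f a (f a + 1) with hg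
  set S' := Finset.image g Finset.univ with hS'
  have hsub : S ⊆ S' := by
    intro y hy
    obtain ⟨c, _, hc⟩ := Finset.mem_image.mp hy
    by_cases hca : c = a
    · subst hca
      have : g b = y := by
        rw [hg, Function.update_of_ne (Ne.symm hab), ← heq, hc]
      exact Finset.mem_image.mpr ⟨b, Finset.mem_univ b, this⟩
    · have : g c = y := by rw [hg, Function.update_of_ne hca, hc]
      exact Finset.mem_image.mpr ⟨c, Finset.mem_univ c, this⟩
  have hsub' : S' ⊆ insert (f a + 1) S := by
    intro y hy
    obtain ⟨c, _, hc⟩ := Finset.mem_image.mp hy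
    by_cases hca : c = a
    · subst hca
      rw [hg, Function.update_self] at hc
      exact Finset.mem_insert.mpr (Or.inl hc.symm)
    · rw [hg, Function.update_of_ne hca] at hc
      exact Finset.mem_insert.mpr (Or.inr (Finset.mem_image.mpr ⟨c, Finset.mem_univ c, hc⟩))
  have hga : g a = f a + 1 := Function.update_self a _ f
  have hScard : S.card < k := by
    have hle : S.card ≤ Finset.univ.card := Finset.card_image_le
    have hne : S.card ≠ (Finset.univ : Finset L).card := by
      intro hcontra
      have hinj := Finset.injOn_of_card_image_eq hcontra
      exact hab (hinj (Finset.mem_coe.mpr (Finset.mem_univ a))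
        (Finset.mem_coe.mpr (Finset.mem_univ b)) heq)
    have : S.card < (Finset.univ : Finset L).card := lt_of_le_of_ne hle hne
    calc S.card < (Finset.univ : Finset L).card := this
      _ = Fintype.card L := Finset.card_univ
      _ ≤ k := hcard
  have hempne : (emp f).Nonempty := by
    rw [← Finset.card_pos]
    have : (emp f).card = k - S.card := by
      unfold emp
      rw [Finset.card_compl, Fintype.card_fin]
    omega
  by_cases hA : f a + 1 ∈ S
  · -- non-filling case
    have hSeq : S' = S := by
      apply Finset.Subset.antisymm
      · intro y hy
        rcases Finset.mem_insert.mp (hsub' hy) with h1 | h1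
        · rw [h1]; exact hA
        · exact h1
      · exact hsub
    have hdd : dd g = dd f := dd_congr (by rw [← hS, ← hS', hSeq])
    unfold M
    rw [← hS, ← hS', hSeq, hdd]
    apply Nat.add_lt_add_left
    apply Finset.sum_lt_sum
    · intro i _
      by_cases hia : i = a
      · rw [hia, hga]
        have hocc : f a + 1 ∉ emp f := by
          unfold emp
          simp only [Finset.mem_compl, not_not]
          exact hA
        have := dd_step f (f a) hempne hocc
        omega
      · rw [hg, Function.update_of_ne hia]
    · refine ⟨a, Finset.mem_univ a, ?_⟩
      rw [hga]
      have hocc : f a + 1 ∉ emp f := by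
        unfold emp
        simp only [Finset.mem_compl, not_not]
        exact hA
      have := dd_step f (f a) hempne hocc
      omega
  · -- filling case
    have hSeq : S' = insert (f a + 1) S := by
      apply Finset.Subset.antisymm hsub'
      intro y hy
      rcases Finset.mem_insert.mp hy with h1 | h1
      · rw [h1, ← hga]
        exact Finset.mem_image.mpr ⟨a, Finset.mem_univ a, rfl⟩
      · exact hsub h1
    have hcardS' : S'.card = S.card + 1 := by
      rw [hSeq, Finset.card_insert_of_notMem hA]
    have hsum2 : ∑ x : L, dd g (g x) ≤ Fintype.card L * k := by
      calc ∑ x : L, dd g (g x) ≤ ∑ _x : L, k :=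
            Finset.sum_le_sum (fun i _ => dd_le g (g i))
        _ = Fintype.card L * k := by
            rw [Finset.sum_const, Finset.card_univ, smul_eq_mul]
    have hn : 0 < Fintype.card L := Fintype.card_pos_iff.mpr ⟨a⟩
    unfold M
    rw [← hS, ← hS', hcardS']
    set n := Fintype.card L
    set c := S.card
    have hsplit : (k + 1) * n * (k - c) = (k + 1) * n * (k - (c + 1)) + (k + 1) * n := by
      have : k - c = (k - (c + 1)) + 1 := by omega
      rw [this]; ring
    have hlt : n * k < (k + 1) * n := by nlinarith
    omega

end Aux

/-- If `|L| ≤ k`, there is no infinite sequence of label-increment steps, and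
every labeling from which no step applies is injective; hence every maximal
sequence of steps terminates in an injective labeling. -/
theorem stmt12 (k : ℕ) [NeZero k] (L : Type*) [Fintype L] [DecidableEq L]
    (hcard : Fintype.card L ≤ k) :
    (¬ ∃ g : ℕ → L → Fin k, ∀ t, OrdStep (g t) (g (t + 1))) ∧
      ∀ f : L → Fin k, (∀ f', ¬ OrdStep f f') → Function.Injective f := by
  constructor
  · rintro ⟨g, hg⟩
    have key : ∀ t, M (g t) + t ≤ M (g 0) := by
      intro t
      induction t with
      | zero => simp
      | succ t ih =>
        have := M_lt hcard (hg t)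
        omega
    have := key (M (g 0) + 1)
    omega
  · intro f hf x y hxy
    by_contra hne
    exact hf (Function.update f x (f x + 1)) ⟨x, y, hne, hxy, rfl⟩
end

section
/- Let k ≥ 1 and let x : Fin k → ℕ satisfy x i ≥ 1 for every i and x i ≠ x j whenever i ≠ j. Then x 0 > x 1 > ⋯ > x (k−1) (i.e., x i > x j whenever i < j as elements of Fin k) if and only if every braket (i,j) occurring in U(x) = Σ_{p=1}^{q} f(G_p) satisfies j = i + 1 (addition in Fin k, i.e., modulo k) or j = 0. -/
lemma mem_circleBrakets {k : ℕ} {G : Finset (Fin k)} {a b : Fin k} :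
    (a, b) ∈ circleBrakets k G ↔
      ∃ t, ∃ h : t < (G.sort (· ≤ ·)).length,
        (G.sort (· ≤ ·))[t] = a ∧
        (G.sort (· ≤ ·))[(t + 1) % (G.sort (· ≤ ·)).length]'
          (Nat.mod_lt _ (by omega)) = b := by
  classical
  have hlen : ((G.sort (· ≤ ·)).zip ((G.sort (· ≤ ·)).rotate 1)).length
      = (G.sort (· ≤ ·)).length := by
    simp [List.length_zip, List.length_rotate]
  rw [circleBrakets, Multiset.mem_coe, List.mem_iff_getElem]
  constructor
  · rintro ⟨t, ht, hget⟩
    have ht' : t < (G.sort (· ≤ ·)).length := hlen ▸ ht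
    rw [List.getElem_zip] at hget
    have hrot : ((G.sort (· ≤ ·)).rotate 1)[t]'(by rw [List.length_rotate]; exact ht')
        = (G.sort (· ≤ ·))[(t + 1) % (G.sort (· ≤ ·)).length]'
            (Nat.mod_lt _ (by omega)) := by
      rw [List.getElem_rotate]
    refine ⟨t, ht', congrArg Prod.fst hget, ?_⟩
    rw [← hrot]; exact congrArg Prod.snd hget
  · rintro ⟨t, ht, ha, hb⟩
    refine ⟨t, hlen ▸ ht, ?_⟩
    rw [List.getElem_zip]
    have hrot : ((G.sort (· ≤ ·)).rotate 1)[t]'(by rw [List.length_rotate]; exact ht)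
        = (G.sort (· ≤ ·))[(t + 1) % (G.sort (· ≤ ·)).length]'
            (Nat.mod_lt _ (by omega)) := by
      rw [List.getElem_rotate]
    rw [hrot, ha, hb]

lemma sort_strictMono {k : ℕ} (G : Finset (Fin k)) :
    ∀ s t (hs : s < (G.sort (· ≤ ·)).length) (ht : t < (G.sort (· ≤ ·)).length),
      s < t → (G.sort (· ≤ ·))[s] < (G.sort (· ≤ ·))[t] := by
  have := (Finset.sortedLT_sort G).pairwise
  rw [List.pairwise_iff_getElem] at this
  exact this

lemma sort_mono {k : ℕ} (G : Finset (Fin k)) :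
    ∀ s t (hs : s < (G.sort (· ≤ ·)).length) (ht : t < (G.sort (· ≤ ·)).length),
      s ≤ t → (G.sort (· ≤ ·))[s] ≤ (G.sort (· ≤ ·))[t] := by
  intro s t hs ht hst
  rcases eq_or_lt_of_le hst with h | h
  · subst h; exact le_refl _
  · exact le_of_lt (sort_strictMono G s t hs ht h)

lemma card_sort_le {k : ℕ} (G : Finset (Fin k)) : (G.sort (· ≤ ·)).length ≤ k := by
  rw [Finset.length_sort]
  calc G.card ≤ Fintype.card (Fin k) := Finset.card_le_univ G
  _ = k := Fintype.card_fin k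

/-- If `G` is downward closed then the `t`-th element of the sorted list is `t`. -/
lemma vals_of_dc {k : ℕ} {G : Finset (Fin k)}
    (hdc : ∀ i j : Fin k, j ∈ G → i < j → i ∈ G) :
    ∀ t (ht : t < (G.sort (· ≤ ·)).length), ((G.sort (· ≤ ·))[t]).val = t := by
  intro t
  induction t with
  | zero =>
    intro ht
    by_contra h
    have hpos : 0 < ((G.sort (· ≤ ·))[0]).val := by omega
    have hk : 0 < k := lt_of_le_of_lt (Nat.zero_le _) ((G.sort (· ≤ ·))[0]).isLt
    set z : Fin k := ⟨0, hk⟩ with hz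
    have hzlt : z < (G.sort (· ≤ ·))[0] := by simpa [Fin.lt_def, hz] using hpos
    have hmemG : (G.sort (· ≤ ·))[0] ∈ G := by
      rw [← Finset.mem_sort (α := Fin k) (· ≤ ·)]; exact List.getElem_mem _
    have hzG : z ∈ G := hdc z _ hmemG hzlt
    have : z ∈ G.sort (· ≤ ·) := (Finset.mem_sort _).mpr hzG
    obtain ⟨s, hs, hsz⟩ := List.mem_iff_getElem.mp this
    have hle : (G.sort (· ≤ ·))[0] ≤ (G.sort (· ≤ ·))[s] :=
      sort_mono G 0 s ht hs (Nat.zero_le _)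
    rw [hsz] at hle
    exact absurd hle (not_le_of_gt hzlt)
  | succ t ih =>
    intro ht
    have ht' : t < (G.sort (· ≤ ·)).length := by omega
    have ihv : ((G.sort (· ≤ ·))[t]).val = t := ih ht'
    have hlt : (G.sort (· ≤ ·))[t] < (G.sort (· ≤ ·))[t+1] :=
      sort_strictMono G t (t+1) ht' ht (by omega)
    have hge : t + 1 ≤ ((G.sort (· ≤ ·))[t+1]).val := by
      have := Fin.lt_def.mp hlt; omega
    by_contra h
    have hgt : t + 2 ≤ ((G.sort (· ≤ ·))[t+1]).val := by omega
    have hk : t + 1 < k := by have := ((G.sort (· ≤ ·))[t+1]).isLt; omega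
    set z : Fin k := ⟨t + 1, hk⟩ with hz
    have hzlt : z < (G.sort (· ≤ ·))[t+1] := by
      rw [Fin.lt_def]; simp [hz]; omega
    have hmemG : (G.sort (· ≤ ·))[t+1] ∈ G := by
      rw [← Finset.mem_sort (α := Fin k) (· ≤ ·)]; exact List.getElem_mem _
    have hzG : z ∈ G := hdc z _ hmemG hzlt
    have : z ∈ G.sort (· ≤ ·) := (Finset.mem_sort _).mpr hzG
    obtain ⟨s, hs, hsz⟩ := List.mem_iff_getElem.mp this
    rcases le_or_gt s t with hst | hst
    · have hle : (G.sort (· ≤ ·))[s] ≤ (G.sort (· ≤ ·))[t] := sort_mono G s t hs ht' hst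
      rw [hsz] at hle
      have := Fin.le_def.mp hle
      simp only [hz] at this; omega
    · have hle : (G.sort (· ≤ ·))[t+1] ≤ (G.sort (· ≤ ·))[s] := sort_mono G (t+1) s ht hs hst
      rw [hsz] at hle
      have := Fin.le_def.mp hle
      simp only [hz] at this; omega

/-- If all brakets of `G` are good then the `t`-th element of the sorted list is `t`. -/
lemma vals_of_fine {k : ℕ} [NeZero k] {G : Finset (Fin k)}
    (hfine : ∀ p : Fin k × Fin k, p ∈ circleBrakets k G → p.2 = p.1 + 1 ∨ p.2 = 0) :
    ∀ t (ht : t < (G.sort (· ≤ ·)).length), ((G.sort (· ≤ ·))[t]).val = t := by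
  have hlenk : (G.sort (· ≤ ·)).length ≤ k := card_sort_le G
  intro t
  induction t with
  | zero =>
    intro ht
    have h1 : (G.sort (· ≤ ·)).length - 1 < (G.sort (· ≤ ·)).length := by omega
    have hmem : ((G.sort (· ≤ ·))[(G.sort (· ≤ ·)).length - 1],
        (G.sort (· ≤ ·))[((G.sort (· ≤ ·)).length - 1 + 1) % (G.sort (· ≤ ·)).length]'
          (Nat.mod_lt _ (by omega))) ∈ circleBrakets k G :=
      mem_circleBrakets.mpr ⟨_, h1, rfl, rfl⟩
    have hidx : ((G.sort (· ≤ ·)).length - 1 + 1) % (G.sort (· ≤ ·)).length = 0 := by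
      have h2 : (G.sort (· ≤ ·)).length - 1 + 1 = (G.sort (· ≤ ·)).length := by omega
      rw [h2, Nat.mod_self]
    simp only [hidx] at hmem
    rcases hfine _ hmem with hc | hc
    · -- L[0] = L[last] + 1
      simp only at hc
      have hle : (G.sort (· ≤ ·))[0] ≤ (G.sort (· ≤ ·))[(G.sort (· ≤ ·)).length - 1] :=
        sort_mono G 0 _ ht h1 (Nat.zero_le _)
      set m := ((G.sort (· ≤ ·))[(G.sort (· ≤ ·)).length - 1]).val with hm
      have hmk : m < k := Fin.isLt _
      rcases Nat.lt_or_ge 1 k with hk2 | hk1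
      · have h1v : (1 : Fin k).val = 1 := by
          rw [Fin.val_one']; exact Nat.mod_eq_of_lt hk2
        have hval : ((G.sort (· ≤ ·))[0]).val = (m + 1) % k := by
          rw [hc, Fin.val_add, h1v]
        rcases Nat.lt_or_ge (m + 1) k with hlt | hge
        · rw [Nat.mod_eq_of_lt hlt] at hval
          have := Fin.le_def.mp hle
          omega
        · have hmk1 : m + 1 = k := by omega
          rw [hmk1, Nat.mod_self] at hval
          exact hval
      · have : ((G.sort (· ≤ ·))[0]).val < 1 := lt_of_lt_of_le (Fin.isLt _) hk1
        omega
    · simp only at hc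
      rw [hc]; exact Fin.val_zero _
  | succ t ih =>
    intro ht
    have ht' : t < (G.sort (· ≤ ·)).length := by omega
    have ihv : ((G.sort (· ≤ ·))[t]).val = t := ih ht'
    have hmem : ((G.sort (· ≤ ·))[t],
        (G.sort (· ≤ ·))[(t + 1) % (G.sort (· ≤ ·)).length]'
          (Nat.mod_lt _ (by omega))) ∈ circleBrakets k G :=
      mem_circleBrakets.mpr ⟨t, ht', rfl, rfl⟩
    have hmod : (t + 1) % (G.sort (· ≤ ·)).length = t + 1 := Nat.mod_eq_of_lt ht
    simp only [hmod] at hmem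
    have hlt : (G.sort (· ≤ ·))[t] < (G.sort (· ≤ ·))[t+1] :=
      sort_strictMono G t (t+1) ht' ht (by omega)
    rcases hfine _ hmem with hc | hc
    · simp only at hc
      have hk2 : t + 1 < k := lt_of_lt_of_le ht hlenk
      have h1v : (1 : Fin k).val = 1 := by
        rw [Fin.val_one']; exact Nat.mod_eq_of_lt (by omega)
      have : ((G.sort (· ≤ ·))[t+1]).val = (t + 1) % k := by
        rw [hc, Fin.val_add, h1v, ihv]
      rw [Nat.mod_eq_of_lt hk2] at this
      exact this
    · simp only at hc
      have := Fin.lt_def.mp hlt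
      rw [hc] at this
      simp at this

/-- Key equivalence: all brakets of `circleBrakets G` are good iff `G` is downward closed. -/
lemma key {k : ℕ} [NeZero k] (G : Finset (Fin k)) :
    (∀ p : Fin k × Fin k, p ∈ circleBrakets k G → p.2 = p.1 + 1 ∨ p.2 = 0) ↔
      ∀ i j : Fin k, j ∈ G → i < j → i ∈ G := by
  have hlenk : (G.sort (· ≤ ·)).length ≤ k := card_sort_le G
  constructor
  · intro hfine i j hjG hij
    have hjL : j ∈ G.sort (· ≤ ·) := (Finset.mem_sort _).mpr hjG
    obtain ⟨s, hs, hsj⟩ := List.mem_iff_getElem.mp hjL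
    have hsv : j.val = s := by rw [← hsj]; exact vals_of_fine hfine s hs
    have hiv : i.val < (G.sort (· ≤ ·)).length := by
      have := Fin.lt_def.mp hij; omega
    have : ((G.sort (· ≤ ·))[i.val]).val = i.val := vals_of_fine hfine _ hiv
    have hieq : (G.sort (· ≤ ·))[i.val] = i := Fin.ext this
    rw [← Finset.mem_sort (α := Fin k) (· ≤ ·), ← hieq]
    exact List.getElem_mem _
  · intro hdc p hp
    obtain ⟨a, b⟩ := p
    rw [mem_circleBrakets] at hp
    obtain ⟨t, ht, ha, hb⟩ := hp
    have hva : a.val = t := by rw [← ha]; exact vals_of_dc hdc t ht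
    rcases lt_or_eq_of_le (Nat.succ_le_of_lt ht) with h1 | h1
    · have hmod : (t + 1) % (G.sort (· ≤ ·)).length = t + 1 := Nat.mod_eq_of_lt h1
      have hvb : b.val = t + 1 := by
        rw [← hb]
        have := vals_of_dc hdc ((t+1) % (G.sort (· ≤ ·)).length) (Nat.mod_lt _ (by omega))
        rw [this]; exact hmod
      left
      apply Fin.ext
      rw [hvb]
      have hk2 : t + 1 < k := lt_of_lt_of_le h1 hlenk
      have h1v : (1 : Fin k).val = 1 := by
        rw [Fin.val_one']; exact Nat.mod_eq_of_lt (by omega)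
      simp only [Fin.val_add, h1v, hva]
      exact (Nat.mod_eq_of_lt hk2).symm
    · have hmod : (t + 1) % (G.sort (· ≤ ·)).length = 0 := by
        have h1' : (G.sort (· ≤ ·)).length = t + 1 := by omega
        rw [h1', Nat.mod_self]
      right
      apply Fin.ext
      have hvb : b.val = 0 := by
        rw [← hb]
        have := vals_of_dc hdc ((t+1) % (G.sort (· ≤ ·)).length) (Nat.mod_lt _ (by omega))
        rw [this]; exact hmod
      simp [hvb]

/-- If every color is present and all counts are distinct, then
`x 0 > x 1 > ⋯ > x (k−1)` if and only if every braket `(i,j)` occurring in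
`U(x)` satisfies `j = i + 1` (mod `k`) or `j = 0`. -/
theorem stmt13 (k : ℕ) [NeZero k] (x : Fin k → ℕ)
    (hpos : ∀ i : Fin k, 1 ≤ x i)
    (hdist : ∀ i j : Fin k, i ≠ j → x i ≠ x j) :
    (∀ i j : Fin k, i < j → x j < x i) ↔
      (∀ p : Fin k × Fin k, p ∈ U k x → p.2 = p.1 + 1 ∨ p.2 = 0) := by
  constructor
  · intro hanti p hp
    rw [U, Multiset.mem_sum] at hp
    obtain ⟨q, hq, hmem⟩ := hp
    refine (key (greedySet k x q)).mpr ?_ p hmem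
    intro i j hj hij
    simp only [greedySet, Finset.mem_filter, Finset.mem_univ, true_and] at hj ⊢
    exact le_of_lt (lt_of_le_of_lt hj (hanti i j hij))
  · intro hfine i j hij
    have hq : x j ∈ Finset.Icc 1 (Finset.univ.sup x) :=
      Finset.mem_Icc.mpr ⟨hpos j, Finset.le_sup (Finset.mem_univ j)⟩
    have hjG : j ∈ greedySet k x (x j) := by simp [greedySet]
    have hGfine : ∀ p : Fin k × Fin k, p ∈ circleBrakets k (greedySet k x (x j)) →
        p.2 = p.1 + 1 ∨ p.2 = 0 := fun p hp =>
      hfine p (by rw [U, Multiset.mem_sum]; exact ⟨x j, hq, hp⟩)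
    have hdc := (key (greedySet k x (x j))).mp hGfine
    have hiG : i ∈ greedySet k x (x j) := hdc i j hjG hij
    simp only [greedySet, Finset.mem_filter, Finset.mem_univ, true_and] at hiG
    exact lt_of_le_of_ne hiG (hdist i j (ne_of_lt hij)).symm
end

section
/- Let k ≥ 1 and let x : Fin k → ℕ satisfy x i ≥ 1 for every i and x i ≠ x j whenever i ≠ j. Suppose it is not the case that x 0 > x 1 > ⋯ > x (k−1). Then in the multiset U(x) = Σ_{p=1}^{q} f(G_p), either there occurs a diagonal braket (i,i) with i ≠ 0, or there occur two brakets (i,j) and (i,ℓ) with the same bra i such that j ≠ ℓ, j ≠ 0, and ℓ ≠ 0. -/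
theorem List.mem_zip_rotate_one {α : Type*} {l : List α} {n : ℕ} (h : n + 1 < l.length) :
    (l[n], l[n + 1]) ∈ l.zip (l.rotate 1) := by
  have hn : n < (l.zip (l.rotate 1)).length := by simp only [List.length_zip, List.length_rotate, min_self]; omega
  convert List.getElem_mem hn using 1
  simp [List.getElem_rotate, Nat.mod_eq_of_lt h]

open Finset

variable {k : ℕ}

theorem mem_greedySet {x : Fin k → ℕ} {p : ℕ} {i : Fin k} : i ∈ greedySet k x p ↔ p ≤ x i := by
  simp [greedySet]

theorem mem_circleBrakets_singleton (m : Fin k) : (m, m) ∈ circleBrakets k {m} := by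
  simp [circleBrakets, sort_singleton]

theorem mem_circleBrakets_of_lt {S : Finset (Fin k)} {i j : Fin k} (hi : i ∈ S) (hj : j ∈ S)
    (hij : i < j) (hgap : ∀ t ∈ S, i < t → j ≤ t) : (i, j) ∈ circleBrakets k S := by
  set L := S.sort (· ≤ ·)
  have hL : L.SortedLT := S.sortedLT_sort
  obtain ⟨a, ha, rfl⟩ := List.getElem_of_mem ((mem_sort (· ≤ ·)).2 hi)
  obtain ⟨b, hb, rfl⟩ := List.getElem_of_mem ((mem_sort (· ≤ ·)).2 hj)
  have hab : a < b := hL.getElem_lt_getElem_iff.1 hij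
  have hnext : L[a + 1] = L[b] := le_antisymm (hL.getElem_le_getElem_iff.2 hab)
    (hgap _ ((mem_sort (· ≤ ·)).1 (List.getElem_mem _)) (hL.getElem_lt_getElem_iff.2 (by omega)))
  rw [← hnext]
  exact List.mem_zip_rotate_one (by omega)

theorem mem_U_of_mem_circleBrakets {x : Fin k → ℕ} {p : ℕ} {i : Fin k} (hp : 1 ≤ p)
    (hpi : p ≤ x i) {b : Fin k × Fin k} (hb : b ∈ circleBrakets k (greedySet k x p)) :
    b ∈ U k x :=
  Multiset.mem_sum.2 ⟨p, mem_Icc.2 ⟨hp, hpi.trans (le_sup (mem_univ i))⟩, hb⟩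

theorem mk_self_mem_U_of_forall_lt {x : Fin k → ℕ} {m : Fin k} (hpos : 1 ≤ x m)
    (hm : ∀ j, j ≠ m → x j < x m) : (m, m) ∈ U k x := by
  have hG : greedySet k x (x m) = {m} := by
    ext j
    rw [mem_greedySet, mem_singleton]
    refine ⟨fun hj => by_contra fun hjm => (hm j hjm).not_ge hj, fun hj => hj ▸ le_rfl⟩
  exact mem_U_of_mem_circleBrakets hpos le_rfl (hG ▸ mem_circleBrakets_singleton m)

theorem mem_U_of_covBy {x : Fin k → ℕ} (hpos : ∀ i, 1 ≤ x i) {i j : Fin k} (hij : i ⋖ j) :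
    (i, j) ∈ U k x :=
  mem_U_of_mem_circleBrakets le_rfl (hpos i) <|
    mem_circleBrakets_of_lt (mem_greedySet.2 (hpos i)) (mem_greedySet.2 (hpos j)) hij.lt
      fun _ _ => hij.ge_of_gt

theorem mem_U_of_forall_mem_Ioi_le {x : Fin k → ℕ} (hpos : ∀ i, 1 ≤ x i)
    (hinj : Function.Injective x) {i a : Fin k} (hi : ∀ t, i < t → x t < x i) (hia : i < a)
    (ha : ∀ t ∈ Ioi i, x t ≤ x a) : (i, a) ∈ U k x :=
  mem_U_of_mem_circleBrakets (hpos a) le_rfl <|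
    mem_circleBrakets_of_lt (mem_greedySet.2 (hi a hia).le) (mem_greedySet.2 le_rfl) hia
      fun t ht hit => (hinj ((ha t (mem_Ioi.2 hit)).antisymm (mem_greedySet.1 ht))).ge

theorem forall_lt_of_covBy [NeZero k] {x : Fin k → ℕ} (hpos : ∀ i, 1 ≤ x i)
    (hinj : Function.Injective x)
    (hfork : ∀ i j l : Fin k, j ≠ l → j ≠ 0 → l ≠ 0 → (i, j) ∈ U k x → (i, l) ∉ U k x)
    {i j : Fin k} (hij : i ⋖ j) (hi : ∀ t, i < t → x t < x i) : ∀ t, j < t → x t < x j := by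
  obtain ⟨a, hia, ha⟩ := exists_max_image (Ioi i) x ⟨j, mem_Ioi.2 hij.lt⟩
  rw [mem_Ioi] at hia
  have hne0 {t : Fin k} (ht : i < t) : t ≠ 0 := ((Fin.zero_le i).trans_lt ht).ne'
  obtain rfl : j = a := by_contra fun hja =>
    hfork i j a hja (hne0 hij.lt) (hne0 hia) (mem_U_of_covBy hpos hij)
      (mem_U_of_forall_mem_Ioi_le hpos hinj hi hia ha)
  exact fun t ht => (ha t (mem_Ioi.2 (hij.lt.trans ht))).lt_of_ne (hinj.ne ht.ne')

theorem strictAnti_of_notMem_U [NeZero k] {x : Fin k → ℕ} (hpos : ∀ i, 1 ≤ x i)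
    (hinj : Function.Injective x) (hloop : ∀ i : Fin k, i ≠ 0 → (i, i) ∉ U k x)
    (hfork : ∀ i j l : Fin k, j ≠ l → j ≠ 0 → l ≠ 0 → (i, j) ∈ U k x → (i, l) ∉ U k x) :
    StrictAnti x := by
  obtain ⟨m, -, hm⟩ := exists_max_image univ x univ_nonempty
  replace hm (j : Fin k) (hj : j ≠ m) : x j < x m := (hm j (mem_univ j)).lt_of_ne (hinj.ne hj)
  obtain rfl : m = 0 := by_contra fun h => hloop m h (mk_self_mem_U_of_forall_lt (hpos m) hm)
  intro i
  refine Succ.rec (P := fun i _ => ∀ t, i < t → x t < x i) (fun t ht => hm t ht.ne')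
    (fun i _ ih => ?_) (Fin.zero_le i)
  by_cases hmax : IsMax i
  · rwa [Order.succ_eq_iff_isMax.2 hmax]
  · exact forall_lt_of_covBy hpos hinj hfork (Order.covBy_succ_of_not_isMax hmax) ih

/-- If every color is present, all counts are distinct, and the counts are not
strictly decreasing in the color order, then `U(x)` contains a diagonal braket
`(i,i)` with `i ≠ 0`, or two brakets `(i,j)` and `(i,ℓ)` with the same bra and
distinct nonzero kets. -/
theorem stmt14 (k : ℕ) [NeZero k] (x : Fin k → ℕ)
    (hpos : ∀ i : Fin k, 1 ≤ x i)
    (hdist : ∀ i j : Fin k, i ≠ j → x i ≠ x j)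
    (hnotsorted : ¬ ∀ i j : Fin k, i < j → x j < x i) :
    (∃ i : Fin k, i ≠ 0 ∧ (i, i) ∈ U k x) ∨
      (∃ i j l : Fin k, j ≠ l ∧ j ≠ 0 ∧ l ≠ 0 ∧
        (i, j) ∈ U k x ∧ (i, l) ∈ U k x) := by
  by_contra h
  push Not at h
  exact hnotsorted <|
    strictAnti_of_notMem_U hpos (Function.injective_iff_pairwise_ne.2 hdist) h.1 h.2
end

section
/- (Leader election per color) Let k, n ≥ 1, let c : Fin n → Fin k be a fixed coloring of the agents, let sch : ℕ → Fin n × Fin n be a schedule with (sch t).1 ≠ (sch t).2 for all t that is weakly fair (every ordered pair of distinct agents equals sch t for infinitely many t), and let leader bits β : ℕ → Fin n → Bool satisfy β 0 a = true for all a and evolve by: letting (a,b) = sch t, if β t a = true, β t b = true and c a = c b, then β(t+1) a = false, and β(t+1) x = β t x for every other assignment (in particular β(t+1) = β t if the condition fails). Then there exists T ∈ ℕ such that β t = β T for all t ≥ T, and for every color i in the range of c there is exactly one agent a with c a = i and β T a = true. -/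
/-- (Leader election per color) With all leader bits initially `true`, and the
rule that when the scheduled pair `(a,b)` consists of two leaders of the same
color the initiator `a` clears its bit (everything else unchanged), under a
weakly fair schedule the leader bits stabilize, and for every color in the range
of `c` exactly one agent of that color keeps a `true` bit. -/
theorem stmt15 (k n : ℕ) (hk : 1 ≤ k) (hn : 1 ≤ n)
    (c : Fin n → Fin k) (sch : ℕ → Fin n × Fin n)
    (hsch : ∀ t, (sch t).1 ≠ (sch t).2)
    (hfair : ∀ p : Fin n × Fin n, p.1 ≠ p.2 → ∀ t₀ : ℕ, ∃ t, t₀ ≤ t ∧ sch t = p)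
    (β : ℕ → Fin n → Bool)
    (hinit : ∀ a, β 0 a = true)
    (hstep : ∀ t, β (t + 1) =
      if β t (sch t).1 = true ∧ β t (sch t).2 = true ∧ c (sch t).1 = c (sch t).2
      then Function.update (β t) (sch t).1 false
      else β t) :
    ∃ T : ℕ, (∀ t ≥ T, β t = β T) ∧
      ∀ i : Fin k, (∃ a, c a = i) →
        ∃! a : Fin n, c a = i ∧ β T a = true := by
  classical
  -- once false, stays false (contrapositive: true now implies true before)
  have hmono : ∀ t a, β (t + 1) a = true → β t a = true := by
    intro t a h
    rw [hstep t] at h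
    split at h
    · rcases eq_or_ne a (sch t).1 with rfl | hne
      · simp [Function.update_self] at h
      · rwa [Function.update_of_ne hne] at h
    · exact h
  -- the set of true agents
  set F : ℕ → Finset (Fin n) := fun t => Finset.univ.filter (fun a => β t a = true)
    with hF
  have hsub : ∀ t, F (t + 1) ⊆ F t := by
    intro t a ha
    simp only [hF, Finset.mem_filter, Finset.mem_univ, true_and] at ha ⊢
    exact hmono t a ha
  have hcard : ∀ s t, s ≤ t → (F t).card ≤ (F s).card := by
    intro s t hst
    induction hst with
    | refl => exact le_refl _
    | step h ih => exact le_trans (Finset.card_le_card (hsub _)) ih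
  have hstrict : ∀ t, β (t + 1) ≠ β t → (F (t + 1)).card < (F t).card := by
    intro t hne
    apply Finset.card_lt_card
    constructor
    · exact hsub t
    · intro hcon
      rw [hstep t] at hne
      split at hne
      · rename_i hc
        have h1 : (sch t).1 ∈ F t := by
          simp [hF, hc.1]
        have h2 : (sch t).1 ∈ F (t + 1) := hcon h1
        simp only [hF, Finset.mem_filter, Finset.mem_univ, true_and] at h2
        rw [hstep t, if_pos hc, Function.update_self] at h2
        exact absurd h2 (by simp)
      · exact hne rfl
    -- done
  -- stabilization time
  obtain ⟨T, hTm⟩ : ∃ T, (F T).card = sInf (Set.range fun t => (F t).card) :=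
    Nat.sInf_mem (Set.range_nonempty _)
  have hconstcard : ∀ t, T ≤ t → (F t).card = (F T).card := by
    intro t ht
    refine le_antisymm (hcard T t ht) ?_
    rw [hTm]
    exact Nat.sInf_le ⟨t, rfl⟩
  have hstab : ∀ t ≥ T, β t = β T := by
    intro t ht
    induction ht with
    | refl => rfl
    | @step s hs ih =>
      by_contra hne
      have hne' : β (s + 1) ≠ β s := by
        intro he; exact hne (he.trans ih)
      have := hstrict s hne'
      rw [hconstcard s hs, hconstcard (s + 1) (le_trans hs (Nat.le_succ s))] at this
      omega
  -- existence invariant: every color in range always has a true agent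
  have hex : ∀ t i, (∃ a, c a = i) → ∃ a, c a = i ∧ β t a = true := by
    intro t
    induction t with
    | zero =>
      rintro i ⟨a, ha⟩
      exact ⟨a, ha, hinit a⟩
    | succ s ih =>
      rintro i hi
      obtain ⟨a, hca, hba⟩ := ih i hi
      rw [hstep s]
      split
      · rename_i hc
        rcases eq_or_ne a (sch s).1 with rfl | hne
        · refine ⟨(sch s).2, ?_, ?_⟩
          · rw [← hc.2.2, hca]
          · rw [Function.update_of_ne (Ne.symm (hsch s))]
            exact hc.2.1
        · exact ⟨a, hca, by rw [Function.update_of_ne hne]; exact hba⟩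
      · exact ⟨a, hca, hba⟩
  refine ⟨T, hstab, ?_⟩
  intro i hi
  obtain ⟨a, hca, hba⟩ := hex T i hi
  refine ⟨a, ⟨hca, hba⟩, ?_⟩
  rintro b ⟨hcb, hbb⟩
  by_contra hne
  obtain ⟨t, ht, hp⟩ := hfair (b, a) hne T
  have hcond : β t (sch t).1 = true ∧ β t (sch t).2 = true ∧
      c (sch t).1 = c (sch t).2 := by
    rw [hp, hstab t ht]
    exact ⟨hbb, hba, by rw [hcb, hca]⟩
  have : β (t + 1) (sch t).1 = false := by
    rw [hstep t, if_pos hcond, Function.update_self]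
  rw [hstab (t + 1) (le_trans ht (Nat.le_succ t)), hp] at this
  rw [this] at hbb
  exact absurd hbb (by simp)
end
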